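/- arXiv:2304.03976 — 3 statements merged into one kernel-verified Lean document; each statement's English description precedes it below -/
import Mathlib

section
/- Isomorphisms via the swap a ↔ b: Let σ be the linear automorphism of F with σ(ε_i) = ε_i for all i, σ(a) = b, σ(b) = a (an isometry of (F,I)). Then σ maps: R(BCC_l^{(2)}(1)) onto R(BB_l^{∨(1)}) and R(C^∨BC_l^{(2)}(1)) onto R(BB_l^{∨(4)}) (for l ≥ 2); R(BCC_l^{(2)}(2)) onto R(C^∨C_l^{(1)}); R(C^∨BC_l^{(2)}(2)) onto R(C^∨C_l^{(4)}); R(BCC_l^{(2)∗_p}) onto R(C^∨C_l^{(1)∗_p}) and R(C^∨BC_l^{(2)∗_p}) onto R(C^∨C_l^{(4)∗_p}) for p ∈ {0,1}; and R(BB_l^{∨(2)}(2)) onto R(C^∨C_l^{(2)}(1)) (for l ≥ 2). In particular each left-hand set is isomorphic as a root system to the corresponding right-hand set. -/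
open Pointwise

noncomputable section

/-- The ambient space `F = ℝ^{l+2}`, with coordinates `0,…,l-1` for the finite part
and coordinates `l, l+1` corresponding to the radical vectors `a, b`. -/
abbrev V (l : ℕ) : Type := Fin (l + 2) → ℝ

/-- The orthonormal vectors `ε_i`. -/
def εv (l : ℕ) (i : Fin l) : V l := Pi.single (Fin.castAdd 2 i) 1

/-- The radical vector `a`. -/
def av (l : ℕ) : V l := Pi.single (Fin.natAdd l (0 : Fin 2)) 1

/-- The radical vector `b`. -/
def bv (l : ℕ) : V l := Pi.single (Fin.natAdd l (1 : Fin 2)) 1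

/-- The positive semi-definite symmetric bilinear form `I` of signature `(l,2,0)`,
with radical `ℝa + ℝb`. -/
def Iform (l : ℕ) (x y : V l) : ℝ :=
  ∑ i : Fin l, x (Fin.castAdd 2 i) * y (Fin.castAdd 2 i)

/-- Short roots of the finite root system `BC_l`. -/
def BCs (l : ℕ) : Set (V l) := ⋃ i : Fin l, {εv l i, -εv l i}

/-- Middle-length roots of the finite root system `BC_l`. -/
def BCm (l : ℕ) : Set (V l) :=
  ⋃ (i : Fin l) (j : Fin l) (_ : i ≠ j),
    {εv l i + εv l j, εv l i - εv l j, -εv l i - εv l j}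

/-- Long roots of the finite root system `BC_l`. -/
def BCl (l : ℕ) : Set (V l) := ⋃ i : Fin l, {(2 : ℝ) • εv l i, -((2 : ℝ) • εv l i)}

/-- The finite root system `BC_l`. -/
def BCfull (l : ℕ) : Set (V l) := BCs l ∪ BCm l ∪ BCl l

/-- The subset `(kℤ)v` of `F`. -/
def Zv (l : ℕ) (k : ℤ) (v : V l) : Set (V l) := {x | ∃ n : ℤ, x = ((k * n : ℤ) : ℝ) • v}

/-- The subset `(kℤ)a`. -/
def Za (l : ℕ) (k : ℤ) : Set (V l) := Zv l k (av l)

/-- The subset `(kℤ)b`. -/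
def Zb (l : ℕ) (k : ℤ) : Set (V l) := Zv l k (bv l)

/-- The subset `(1+2ℤ)a`. -/
def oddZa (l : ℕ) : Set (V l) := {x | ∃ n : ℤ, x = ((1 + 2 * n : ℤ) : ℝ) • av l}

/-- The subset `L_{i,j}^{s1,s2} = {s2·m·a + s1·n·b : (m-i)(n-j) ≡ 0 mod 2}`;
`L_{i,j} = Lset l i j 1 1`. -/
def Lset (l : ℕ) (i j s1 s2 : ℤ) : Set (V l) :=
  {x | ∃ m n : ℤ, (2 : ℤ) ∣ ((m - i) * (n - j)) ∧
    x = ((s2 * m : ℤ) : ℝ) • av l + ((s1 * n : ℤ) : ℝ) • bv l}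

/-- The subset `{ma + 2nb : m ≡ n mod 2}` occurring in the ◇-type system. -/
def diaL (l : ℕ) : Set (V l) :=
  {x | ∃ m n : ℤ, (2 : ℤ) ∣ (m - n) ∧ x = ((m : ℤ) : ℝ) • av l + ((2 * n : ℤ) : ℝ) • bv l}

/-- The four types of non-reduced affine root systems. -/
inductive AffType | BCC | CvBC | BBv | CvC

/-- First tier number: the multiplier of `ℤb` on the middle part. -/
def tfm : AffType → ℤ | .BCC => 1 | .CvBC => 2 | .BBv => 1 | .CvC => 2

/-- The multiplier of `ℤb` on the long part. -/
def tfl : AffType → ℤ | .BCC => 1 | .CvBC => 4 | .BBv => 2 | .CvC => 2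

/-- Short part of the affine root system `R(X_l)`. -/
def AffS (l : ℕ) (_X : AffType) : Set (V l) := BCs l + Zb l 1

/-- Middle part of the affine root system `R(X_l)`. -/
def AffM (l : ℕ) (X : AffType) : Set (V l) := BCm l + Zb l (tfm X)

/-- Long part of the affine root system `R(X_l)`. -/
def AffL (l : ℕ) (X : AffType) : Set (V l) := BCl l + Zb l (tfl X)

/-- The affine root system `R(X_l)` for `X ∈ {BCC, C^∨BC, BB^∨, C^∨C}`. -/
def Aff (l : ℕ) (X : AffType) : Set (V l) := AffS l X ∪ AffM l X ∪ AffL l X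

/-- The reduced classical types `BC_l^{(1,2)}, BC_l^{(4,2)}, BC_l^{(2,2)σ}(1), BC_l^{(2,2)σ}(2)`
(for `X = BCC, C^∨BC, BB^∨, C^∨C` respectively). -/
def redClassical (l : ℕ) (X : AffType) : Set (V l) :=
  (AffS l X + Za l 1) ∪ (AffM l X + Za l 1) ∪ (AffL l X + oddZa l)

/-- `R(BC_l^{(1,1)∗})`. -/
def RBC11star (l : ℕ) : Set (V l) :=
  (AffS l .BCC + Za l 1) ∪ (AffM l .BCC + Za l 1) ∪ (BCl l + Lset l 1 1 1 1)

/-- `R(BC_l^{(4,4)∗})`. -/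
def RBC44star (l : ℕ) : Set (V l) :=
  (BCs l + Lset l 1 1 1 1) ∪ (AffM l .CvBC + Za l 2) ∪ (AffL l .CvBC + Za l 4)

/-- `R(X_l^{(1)})`. -/
def E1 (l : ℕ) (X : AffType) : Set (V l) := Aff l X + Za l 1

/-- `R(X_l^{(2)}(i))`. -/
def E2 (l : ℕ) (X : AffType) (i : ℤ) : Set (V l) :=
  (AffS l X + Za l 1) ∪ (AffM l X + Za l i) ∪ (AffL l X + Za l 2)

/-- `R(X_l^{(4)})`. -/
def E4 (l : ℕ) (X : AffType) : Set (V l) :=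
  (AffS l X + Za l 1) ∪ (AffM l X + Za l 2) ∪ (AffL l X + Za l 4)

/-- `R(BCC_l^{(1)∗})`-type systems: `BCC1star l 0 0 = R(BCC_l^{(1)∗_0})`,
`BCC1star l 0 1 = R(BCC_l^{(1)∗_{0'}})`, `BCC1star l 1 1 = R(BCC_l^{(1)∗_1}) = R(BC_l^{(1,1)∗})`. -/
def BCC1star (l : ℕ) (i j : ℤ) : Set (V l) :=
  (AffS l .BCC + Za l 1) ∪ (AffM l .BCC + Za l 1) ∪ (BCl l + Lset l i j 1 1)

/-- `R(BCC_l^{(2)∗_p})`. -/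
def BCC2star (l : ℕ) (p : ℤ) : Set (V l) :=
  (AffS l .BCC + Za l 1) ∪ (AffM l .BCC + Za l 2) ∪ (BCl l + Lset l p p 1 2)

/-- `R(C^∨BC_l^{(2)∗_p})`. -/
def CvBC2star (l : ℕ) (p : ℤ) : Set (V l) :=
  (BCs l + Lset l p p 1 1) ∪ (AffM l .CvBC + Za l 2) ∪ (AffL l .CvBC + Za l 2)

/-- `R(C^∨BC_l^{(4)∗})`-type systems: `CvBC4star l 0 0 = R(C^∨BC_l^{(4)∗_0})`,
`CvBC4star l 0 1 = R(C^∨BC_l^{(4)∗_{0'}})`, `CvBC4star l 1 1 = R(C^∨BC_l^{(4)∗_1}) = R(BC_l^{(4,4)∗})`. -/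
def CvBC4star (l : ℕ) (i j : ℤ) : Set (V l) :=
  (BCs l + Lset l i j 1 1) ∪ (AffM l .CvBC + Za l 2) ∪ (AffL l .CvBC + Za l 4)

/-- `R(BB_2^{∨(2)∗})` (its defining pattern, written for general `l`). -/
def BB2star (l : ℕ) : Set (V l) :=
  (BCs l + Za l 1 + Zb l 1) ∪ (BCm l + Lset l 0 0 1 1) ∪ (BCl l + Za l 2 + Zb l 2)

/-- `R(C^∨C_l^{(1)∗_p})`. -/
def CvC1star (l : ℕ) (p : ℤ) : Set (V l) :=
  (AffS l .CvC + Za l 1) ∪ (AffM l .CvC + Za l 1) ∪ (BCl l + Lset l p p 2 1)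

/-- `R(C^∨C_l^{(2)∗})`-type systems: `CvC2star l 0 0 = R(C^∨C_l^{(2)∗_0})`,
`CvC2star l 1 1 = R(C^∨C_l^{(2)∗_1})`, `CvC2star l 1 0 = R(C^∨C_l^{(2)∗_{1'}})`. -/
def CvC2star (l : ℕ) (i j : ℤ) : Set (V l) :=
  (BCs l + Lset l 0 0 1 1) ∪ (AffM l .CvC + Za l 2) ∪ (BCl l + Lset l i j 2 2)

/-- `R(C^∨C_l^{(2)∗_s})`. -/
def CvC2starS (l : ℕ) : Set (V l) :=
  (BCs l + Lset l 0 0 1 1) ∪ (AffM l .CvC + Za l 2) ∪ (AffL l .CvC + Za l 2)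

/-- `R(C^∨C_l^{(2)∗_l})`. -/
def CvC2starL (l : ℕ) : Set (V l) :=
  (AffS l .CvC + Za l 1) ∪ (AffM l .CvC + Za l 2) ∪ (BCl l + Lset l 0 0 2 2)

/-- `R(C^∨C_l^{(4)∗_p})`. -/
def CvC4star (l : ℕ) (p : ℤ) : Set (V l) :=
  (BCs l + Lset l p p 1 1) ∪ (AffM l .CvC + Za l 2) ∪ (AffL l .CvC + Za l 4)

/-- `R(C^∨C_l^{(2)◇})`. -/
def CvC2dia (l : ℕ) : Set (V l) :=
  (AffS l .CvC + Za l 1) ∪ (AffM l .CvC + Za l 1) ∪ (BCl l + diaL l)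

/-- The reflection `w_α`. -/
def reflV (l : ℕ) (α x : V l) : V l := x - (2 * Iform l x α / Iform l α α) • α

/-- A generalized root system in `(F, I)`; since `I` has signature `(l,2,0)`, this is
exactly an elliptic root system. -/
structure IsERS (l : ℕ) (R : Set (V l)) : Prop where
  /-- `R` is discrete. -/
  discrete : ∀ x ∈ R, ∃ ε > 0, ∀ y ∈ R, ‖x - y‖ < ε → y = x
  /-- The root lattice `Q(R)` is full in `F`. -/
  spans : Submodule.span ℝ R = ⊤
  /-- roots are non-isotropic. -/
  nonisotropic : ∀ α ∈ R, Iform l α α ≠ 0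
  /-- integrality: `2 I(α,β)/I(α,α) ∈ ℤ`. -/
  integral : ∀ α ∈ R, ∀ β ∈ R, ∃ n : ℤ, 2 * Iform l α β = (n : ℝ) * Iform l α α
  /-- each reflection `w_α` maps `R` onto `R`. -/
  reflects : ∀ α ∈ R, reflV l α '' R = R
  /-- irreducibility. -/
  irred : ∀ R1 R2 : Set (V l), R1 ∪ R2 = R →
    (∀ x ∈ R1, ∀ y ∈ R2, Iform l x y = 0) → R1 = ∅ ∨ R2 = ∅

/-- `R` is reduced. -/
def IsReducedRS (l : ℕ) (R : Set (V l)) : Prop := ∀ α ∈ R, (2 : ℝ) • α ∉ R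

/-- `R` is non-reduced. -/
def IsNonReducedRS (l : ℕ) (R : Set (V l)) : Prop := ∃ α ∈ R, (2 : ℝ) • α ∈ R

/-- The radical `ℝa + ℝb` of `I`. -/
def radSpan (l : ℕ) : Submodule ℝ (V l) := Submodule.span ℝ {av l, bv l}

/-- The marking line `G = ℝa`. -/
def Ga (l : ℕ) : Submodule ℝ (V l) := Submodule.span ℝ {av l}

/-- `G` is a marking of `R`: a one-dimensional subspace of `rad(I)` such that
`G ∩ Q(R)` is full in `G`. -/
def IsMarking (l : ℕ) (R : Set (V l)) (G : Submodule ℝ (V l)) : Prop :=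
  G ≤ radSpan l ∧ Module.finrank ℝ G = 1 ∧
    ∃ v : V l, v ≠ 0 ∧ v ∈ G ∧ v ∈ AddSubgroup.closure R

/-- `φ` rescales the form `I` by the factor `c`. -/
def IsSimilarity (l : ℕ) (φ : V l ≃ₗ[ℝ] V l) (c : ℝ) : Prop :=
  ∀ x y : V l, Iform l (φ x) (φ y) = c * Iform l x y

/-- Isomorphism of root systems in `(F, I)`. -/
def IsoRS (l : ℕ) (R R' : Set (V l)) : Prop :=
  ∃ (φ : V l ≃ₗ[ℝ] V l) (c : ℝ), 0 < c ∧ IsSimilarity l φ c ∧ φ '' R = R'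

/-- Isomorphism of marked root systems (with marking `ℝa` on both sides). -/
def IsoRSa (l : ℕ) (R R' : Set (V l)) : Prop :=
  ∃ (φ : V l ≃ₗ[ℝ] V l) (c : ℝ), 0 < c ∧ IsSimilarity l φ c ∧
    φ '' (Ga l : Set (V l)) = (Ga l : Set (V l)) ∧ φ '' R = R'

/-- The quotient `R/G` (image of `R` in `F/G`) is non-reduced. -/
def QuotNonReduced (l : ℕ) (R : Set (V l)) (G : Submodule ℝ (V l)) : Prop :=
  ∃ α ∈ R, ∃ β ∈ R, G.mkQ β = (2 : ℝ) • G.mkQ α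

/-- The quotient `R/G` is isomorphic, as an affine root system, to the affine root system
`X ⊆ span(ε_1,…,ε_l,b)`: encoded via `p = ψ ∘ (F → F/G)` for an isomorphism
`ψ : F/G ≅ span(ε_1,…,ε_l,b)` with `Ī(u,v) = c·I(ψu,ψv)` and `ψ(R/G) = X`. -/
def QuotIsType (l : ℕ) (R : Set (V l)) (G : Submodule ℝ (V l)) (X : Set (V l)) : Prop :=
  ∃ (p : V l →ₗ[ℝ] V l) (c : ℝ), 0 < c ∧
    LinearMap.ker p = G ∧
    LinearMap.range p = Submodule.span ℝ (Set.range (εv l) ∪ {bv l}) ∧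
    (∀ x y : V l, Iform l x y = c * Iform l (p x) (p y)) ∧
    p '' R = X

end

/-!
The swap fixes every `ε_i` and exchanges `a` and `b`, so it preserves `I` and maps each block
`S + kℤb + k'ℤa` (with `S` a part of `BC_l`) to `S + kℤa + k'ℤb`, and `L^{s₁,s₂}_{i,j}` to
`L^{s₂,s₁}_{j,i}`. Every claimed equality is then a rearrangement of the defining unions.
-/

section SwapImages

variable {l : ℕ} {F : Type*} [FunLike F (V l) (V l)] [LinearMapClass F ℝ (V l) (V l)] (f : F)

lemma apply_castAdd_of_swap (hε : ∀ i : Fin l, f (εv l i) = εv l i)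
    (ha : f (av l) = bv l) (hb : f (bv l) = av l) (x : V l) (j : Fin l) :
    f x (Fin.castAdd 2 j) = x (Fin.castAdd 2 j) := by
  have hproj : (LinearMap.proj (Fin.castAdd 2 j)).comp (f : V l →ₗ[ℝ] V l) =
      LinearMap.proj (R := ℝ) (φ := fun _ : Fin (l + 2) => ℝ) (Fin.castAdd 2 j) := by
    refine (Pi.basisFun ℝ (Fin (l + 2))).ext fun k => ?_
    refine Fin.addCases (fun i => ?_) (fun k => ?_) k
    · simpa [εv] using congrFun (hε i) (Fin.castAdd 2 j)
    · have hne : ∀ k : Fin 2, Fin.castAdd 2 j ≠ Fin.natAdd l k := fun k h => by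
        have := congrArg Fin.val h
        simp only [Fin.val_castAdd, Fin.val_natAdd] at this
        omega
      simp only [av, bv] at ha hb
      fin_cases k <;> simp [ha, hb, hne]
  exact LinearMap.congr_fun hproj x

lemma image_Zv (k : ℤ) (v : V l) : f '' Zv l k v = Zv l k (f v) := by
  ext y
  constructor
  · rintro ⟨x, ⟨n, rfl⟩, rfl⟩
    exact ⟨n, map_smul f _ v⟩
  · rintro ⟨n, rfl⟩
    exact ⟨_, ⟨n, rfl⟩, map_smul f _ v⟩

lemma image_Za (ha : f (av l) = bv l) (k : ℤ) : f '' Za l k = Zb l k := by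
  rw [Za, image_Zv, ha, Zb]

lemma image_Zb (hb : f (bv l) = av l) (k : ℤ) : f '' Zb l k = Za l k := by
  rw [Zb, image_Zv, hb, Za]

lemma image_Lset (ha : f (av l) = bv l) (hb : f (bv l) = av l) (i j s₁ s₂ : ℤ) :
    f '' Lset l i j s₁ s₂ = Lset l j i s₂ s₁ := by
  have hswap : ∀ m n : ℤ, f (((s₂ * m : ℤ) : ℝ) • av l + ((s₁ * n : ℤ) : ℝ) • bv l) =
      ((s₁ * n : ℤ) : ℝ) • av l + ((s₂ * m : ℤ) : ℝ) • bv l := fun m n => by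
    rw [map_add, map_smul, map_smul, ha, hb, add_comm]
  ext y
  constructor
  · rintro ⟨x, ⟨m, n, hmn, rfl⟩, rfl⟩
    exact ⟨n, m, mul_comm (m - i) (n - j) ▸ hmn, hswap m n⟩
  · rintro ⟨n, m, hnm, rfl⟩
    exact ⟨_, ⟨m, n, mul_comm (n - j) (m - i) ▸ hnm, rfl⟩, hswap m n⟩

lemma image_BCs (hε : ∀ i : Fin l, f (εv l i) = εv l i) : f '' BCs l = BCs l := by
  simp only [BCs, Set.image_iUnion, Set.image_insert_eq, Set.image_singleton, map_neg, hε]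

lemma image_BCm (hε : ∀ i : Fin l, f (εv l i) = εv l i) : f '' BCm l = BCm l := by
  simp only [BCm, Set.image_iUnion, Set.image_insert_eq, Set.image_singleton,
    map_add, map_sub, map_neg, hε]

lemma image_BCl (hε : ∀ i : Fin l, f (εv l i) = εv l i) : f '' BCl l = BCl l := by
  simp only [BCl, Set.image_iUnion, Set.image_insert_eq, Set.image_singleton,
    map_neg, map_smul, hε]

end SwapImages

lemma isSimilarity_of_swap {l : ℕ} (σ : V l ≃ₗ[ℝ] V l) (hε : ∀ i : Fin l, σ (εv l i) = εv l i)
    (ha : σ (av l) = bv l) (hb : σ (bv l) = av l) : IsSimilarity l σ 1 := fun x y => by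
  simp only [Iform, one_mul, apply_castAdd_of_swap σ hε ha hb]

theorem isomorphisms_via_swap_general
    {l : ℕ} (σ : V l ≃ₗ[ℝ] V l)
    (hε : ∀ i : Fin l, σ (εv l i) = εv l i)
    (ha : σ (av l) = bv l) (hb : σ (bv l) = av l) :
    IsSimilarity l σ 1 ∧
    (2 ≤ l → σ '' E2 l .BCC 1 = E1 l .BBv ∧ σ '' E2 l .CvBC 1 = E4 l .BBv) ∧
    σ '' E2 l .BCC 2 = E1 l .CvC ∧
    σ '' E2 l .CvBC 2 = E4 l .CvC ∧
    (∀ p : ℤ, p = 0 ∨ p = 1 →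
      σ '' BCC2star l p = CvC1star l p ∧ σ '' CvBC2star l p = CvC4star l p) ∧
    (2 ≤ l → σ '' E2 l .BBv 2 = E2 l .CvC 1) ∧
    (2 ≤ l → IsoRS l (E2 l .BCC 1) (E1 l .BBv) ∧ IsoRS l (E2 l .CvBC 1) (E4 l .BBv) ∧
      IsoRS l (E2 l .BBv 2) (E2 l .CvC 1)) ∧
    IsoRS l (E2 l .BCC 2) (E1 l .CvC) ∧
    IsoRS l (E2 l .CvBC 2) (E4 l .CvC) ∧
    (∀ p : ℤ, p = 0 ∨ p = 1 →
      IsoRS l (BCC2star l p) (CvC1star l p) ∧ IsoRS l (CvBC2star l p) (CvC4star l p)) := by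
  have hsim := isSimilarity_of_swap σ hε ha hb
  have iso : ∀ {R R' : Set (V l)}, σ '' R = R' → IsoRS l R R' := fun h => ⟨σ, 1, one_pos, hsim, h⟩
  obtain ⟨h₁, h₂, h₃, h₄, h₅, h₆, h₇⟩ :
      σ '' E2 l .BCC 1 = E1 l .BBv ∧ σ '' E2 l .CvBC 1 = E4 l .BBv ∧
      σ '' E2 l .BCC 2 = E1 l .CvC ∧ σ '' E2 l .CvBC 2 = E4 l .CvC ∧
      (∀ p, σ '' BCC2star l p = CvC1star l p) ∧ (∀ p, σ '' CvBC2star l p = CvC4star l p) ∧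
      σ '' E2 l .BBv 2 = E2 l .CvC 1 := by
    refine ⟨?_, ?_, ?_, ?_, fun p => ?_, fun p => ?_, ?_⟩ <;>
    simp only [E1, E2, E4, BCC2star, CvBC2star, CvC1star, CvC4star, Aff, Set.union_add,
      AffS, AffM, AffL, tfm, tfl, Set.image_union, Set.image_add, image_BCs σ hε, image_BCm σ hε,
      image_BCl σ hε, image_Za σ ha, image_Zb σ hb, image_Lset σ ha hb,
      add_right_comm (_ : Set (V l)) (Zb l _)]
  exact ⟨hsim, fun _ => ⟨h₁, h₂⟩, h₃, h₄, fun p _ => ⟨h₅ p, h₆ p⟩, fun _ => h₇,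
    fun _ => ⟨iso h₁, iso h₂, iso h₇⟩, iso h₃, iso h₄, fun p _ => ⟨iso (h₅ p), iso (h₆ p)⟩⟩

/-- **Isomorphisms via the swap `a ↔ b`.** -/
theorem isomorphisms_via_swap
    {l : ℕ} (hl : 1 ≤ l) (σ : V l ≃ₗ[ℝ] V l)
    (hε : ∀ i : Fin l, σ (εv l i) = εv l i)
    (ha : σ (av l) = bv l) (hb : σ (bv l) = av l) :
    IsSimilarity l σ 1 ∧
    (2 ≤ l → σ '' E2 l .BCC 1 = E1 l .BBv ∧ σ '' E2 l .CvBC 1 = E4 l .BBv) ∧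
    σ '' E2 l .BCC 2 = E1 l .CvC ∧
    σ '' E2 l .CvBC 2 = E4 l .CvC ∧
    (∀ p : ℤ, p = 0 ∨ p = 1 →
      σ '' BCC2star l p = CvC1star l p ∧ σ '' CvBC2star l p = CvC4star l p) ∧
    (2 ≤ l → σ '' E2 l .BBv 2 = E2 l .CvC 1) ∧
    (2 ≤ l → IsoRS l (E2 l .BCC 1) (E1 l .BBv) ∧ IsoRS l (E2 l .CvBC 1) (E4 l .BBv) ∧
      IsoRS l (E2 l .BBv 2) (E2 l .CvC 1)) ∧
    IsoRS l (E2 l .BCC 2) (E1 l .CvC) ∧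
    IsoRS l (E2 l .CvBC 2) (E4 l .CvC) ∧
    (∀ p : ℤ, p = 0 ∨ p = 1 →
      IsoRS l (BCC2star l p) (CvC1star l p) ∧ IsoRS l (CvBC2star l p) (CvC4star l p)) :=
  isomorphisms_via_swap_general σ hε ha hb
end

section
/- Well-definedness of the reduced ∗-types (Azam's systems): The sets R(BC_l^{(1,1)∗}) = (R(BCC_l)_s + ℤa) ∪ (R(BCC_l)_m + ℤa) ∪ (R(BC_l)_l + L_{1,1}) and R(BC_l^{(4,4)∗}) = (R(BC_l)_s + L_{1,1}) ∪ (R(C^∨BC_l)_m + 2ℤa) ∪ (R(C^∨BC_l)_l + 4ℤa) are reduced elliptic root systems in (F,I), ℝa is a marking of each, and their quotients modulo ℝa are the images of R(BCC_l) and R(C^∨BC_l) respectively; in particular both quotients are non-reduced. -/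
open Pointwise

/-!
Both systems consist of the vectors `∑ fᵢ εᵢ + m a + n b` with `f ∈ ℤˡ` of norm `1`, `2` or `4`
(even in the last case), i.e. `∑ fᵢ εᵢ ∈ R(BC_l)`, and with `(m, n)` in a subset `Ls`, `Lm` or `Ll`
of `ℤ²` according to the length. For such a set the reflection in `α = (f, p)` sends `β = (g, q)`
to `(g - k f, q - k p)` with `k = 2I(α,β)/I(α,α)`; the finite part keeps its norm, so closure under
reflections reduces to parity conditions on `Ls, Lm, Ll`, which hold for `L_{1,1}`, `ℤ²`, `2ℤ²` and
`4ℤ²`. Every root is non-orthogonal to some long root `2εᵢ + …`, and any two of these are linked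
through a middle root `εᵢ + εⱼ + …`, which gives irreducibility. Modulo `ℝa` only the
`b`-coordinates of the radical parts survive, so the quotients are those of `R(BCC_l)` and
`R(C^∨BC_l)`.
-/

open Pointwise Matrix

noncomputable section

namespace ReducedStar

section IntegerVectors

variable {ι : Type*} [Fintype ι]

lemma exists_ne_zero_of_dotProduct_self_pos {f : ι → ℤ} (h : 0 < f ⬝ᵥ f) : ∃ i, f i ≠ 0 := by
  by_contra! hf
  simp [show f = 0 from funext hf] at h

lemma dotProduct_sub_single_self [DecidableEq ι] (f : ι → ℤ) (i : ι) :
    (f - Pi.single i (f i)) ⬝ᵥ (f - Pi.single i (f i)) = f ⬝ᵥ f - f i * f i := by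
  simp only [sub_dotProduct, dotProduct_sub, single_dotProduct, dotProduct_single, Pi.sub_apply,
    Pi.single_eq_same, dotProduct_comm f]
  ring

lemma eq_single_of_dotProduct_self_eq_one [DecidableEq ι] {f : ι → ℤ} (h : f ⬝ᵥ f = 1) :
    ∃ i, (f i = 1 ∨ f i = -1) ∧ f = Pi.single i (f i) := by
  obtain ⟨i, hi⟩ := exists_ne_zero_of_dotProduct_self_pos (h ▸ one_pos)
  have hrest := dotProduct_sub_single_self f i
  have hsq : 1 ≤ f i * f i := by rcases lt_or_gt_of_ne hi with h' | h' <;> nlinarith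
  have hnonneg := dotProduct_self_star_nonneg (f - Pi.single i (f i))
  simp only [star_trivial] at hnonneg
  have hfi : f i * f i = 1 := by linarith
  refine ⟨i, mul_self_eq_one_iff.mp hfi, sub_eq_zero.mp (dotProduct_self_eq_zero.mp ?_)⟩
  linarith

lemma eq_single_add_single_of_dotProduct_self_eq_two [DecidableEq ι] {f : ι → ℤ}
    (h : f ⬝ᵥ f = 2) :
    ∃ i j, i ≠ j ∧ (f i = 1 ∨ f i = -1) ∧ (f j = 1 ∨ f j = -1) ∧
      f = Pi.single i (f i) + Pi.single j (f j) := by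
  obtain ⟨i, hi⟩ := exists_ne_zero_of_dotProduct_self_pos (h ▸ two_pos)
  have hrest := dotProduct_sub_single_self f i
  have hnonneg := dotProduct_self_star_nonneg (f - Pi.single i (f i))
  simp only [star_trivial] at hnonneg
  have hfi : f i * f i = 1 := by
    obtain ⟨h1, h2⟩ : -1 ≤ f i ∧ f i ≤ 1 := by constructor <;> nlinarith
    interval_cases hfi : f i <;> simp_all
  obtain ⟨j, hj, hfj⟩ := eq_single_of_dotProduct_self_eq_one (hrest.trans (by rw [h, hfi]; rfl))
  have hij : i ≠ j := by
    rintro rfl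
    simp at hj
  have hgj : (f - Pi.single i (f i) : ι → ℤ) j = f j := by simp [hij.symm]
  rw [hgj] at hj hfj
  exact ⟨i, j, hij, mul_self_eq_one_iff.mp hfi, hj, by rw [← hfj, add_sub_cancel]⟩

lemma eq_two_smul_of_dotProduct_self_eq_four {f : ι → ℤ} (h : f ⬝ᵥ f = 4)
    (hev : ∀ i, 2 ∣ f i) : ∃ g : ι → ℤ, g ⬝ᵥ g = 1 ∧ f = (2 : ℤ) • g := by
  choose g hg using hev
  have hf : f = (2 : ℤ) • g := funext fun i => by simp [hg i]
  refine ⟨g, ?_, hf⟩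
  simp only [hf, smul_dotProduct, dotProduct_smul, smul_eq_mul] at h
  linarith

lemma dotProduct_self_single_add_single [DecidableEq ι] {i j : ι} (hij : i ≠ j) (s t : ℤ) :
    (Pi.single i s + Pi.single j t) ⬝ᵥ (Pi.single i s + Pi.single j t) = s * s + t * t := by
  simp [dotProduct_add, hij, hij.symm]

lemma dvd_dotProduct_of_dvd_left {a : ℤ} {f : ι → ℤ} (hf : ∀ i, a ∣ f i) (g : ι → ℤ) :
    a ∣ f ⬝ᵥ g :=
  Finset.dvd_sum fun i _ => (hf i).mul_right _

lemma mul_dvd_dotProduct {a b : ℤ} {f g : ι → ℤ} (hf : ∀ i, a ∣ f i) (hg : ∀ i, b ∣ g i) :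
    a * b ∣ f ⬝ᵥ g :=
  Finset.dvd_sum fun i _ => mul_dvd_mul (hf i) (hg i)

lemma dotProduct_sub_smul_self {f g : ι → ℤ} {k : ℤ} (hk : k * (f ⬝ᵥ f) = 2 * (f ⬝ᵥ g)) :
    (g - k • f) ⬝ᵥ (g - k • f) = g ⬝ᵥ g := by
  simp only [sub_dotProduct, dotProduct_sub, smul_dotProduct, dotProduct_smul, smul_eq_mul,
    dotProduct_comm g f]
  linear_combination k * hk

lemma eq_of_norm_sub_lt_one {x y : ι → ℝ} (hx : ∀ i, ∃ m : ℤ, x i = m)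
    (hy : ∀ i, ∃ n : ℤ, y i = n) (h : ‖x - y‖ < 1) : x = y := by
  funext i
  obtain ⟨m, hm⟩ := hx i
  obtain ⟨n, hn⟩ := hy i
  have : |((m - n : ℤ) : ℝ)| < 1 := by
    push_cast
    rw [← hm, ← hn]
    exact (norm_le_pi_norm (x - y) i).trans_lt h
  rw [← Int.cast_abs, ← Int.cast_one, Int.cast_lt, Int.abs_lt_one_iff, sub_eq_zero] at this
  rw [hm, hn, this]

end IntegerVectors

theorem irred_of_transGen {α M : Type*} [Zero M] (B : α → α → M) {R : Set α}
    (hR : ∀ x ∈ R, ∀ y ∈ R, Relation.TransGen (fun u v => v ∈ R ∧ B u v ≠ 0) x y)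
    (R1 R2 : Set α) (hR12 : R1 ∪ R2 = R) (horth : ∀ x ∈ R1, ∀ y ∈ R2, B x y = 0) :
    R1 = ∅ ∨ R2 = ∅ := by
  refine or_iff_not_imp_left.mpr fun h1 => Set.eq_empty_of_forall_notMem fun y hy => ?_
  obtain ⟨x, hx⟩ := Set.nonempty_iff_ne_empty.mpr h1
  have hchain : ∀ v, Relation.ReflTransGen (fun u v => v ∈ R ∧ B u v ≠ 0) x v → v ∈ R1 := by
    intro v hv
    induction hv with
    | refl => exact hx
    | tail _ hvw ih =>
      rcases (hR12 ▸ hvw.1 : _ ∈ R1 ∪ R2) with h | h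
      exacts [h, absurd (horth _ ih _ h) hvw.2]
  obtain ⟨u, hxu, -, huy⟩ :=
    Relation.TransGen.tail'_iff.mp (hR x (hR12 ▸ .inl hx) y (hR12 ▸ .inr hy))
  exact huy (horth u (hchain u hxu) y hy)

variable {l : ℕ}

/-- `intVec l f p = ∑ fᵢ εᵢ + p.1 a + p.2 b`. -/
def intVec (l : ℕ) (f : Fin l → ℤ) (p : ℤ × ℤ) : V l :=
  fun j => ((Fin.append f ![p.1, p.2] j : ℤ) : ℝ)

@[simp] lemma intVec_castAdd (f : Fin l → ℤ) (p : ℤ × ℤ) (i : Fin l) :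
    intVec l f p (Fin.castAdd 2 i) = f i := by
  simp [intVec]

@[simp] lemma intVec_natAdd_zero (f : Fin l → ℤ) (p : ℤ × ℤ) :
    intVec l f p (Fin.natAdd l 0) = p.1 := by
  simp [intVec]

@[simp] lemma intVec_natAdd_one (f : Fin l → ℤ) (p : ℤ × ℤ) :
    intVec l f p (Fin.natAdd l 1) = p.2 := by
  simp [intVec]

lemma ext_castAdd_natAdd {x y : V l} (h : ∀ i, x (Fin.castAdd 2 i) = y (Fin.castAdd 2 i))
    (h0 : x (Fin.natAdd l 0) = y (Fin.natAdd l 0)) (h1 : x (Fin.natAdd l 1) = y (Fin.natAdd l 1)) :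
    x = y := by
  funext j
  refine Fin.addCases h (fun j => ?_) j
  fin_cases j
  exacts [h0, h1]

lemma intVec_injective {f g : Fin l → ℤ} {p q : ℤ × ℤ} (h : intVec l f p = intVec l g q) :
    f = g ∧ p = q := by
  refine ⟨funext fun i => ?_, Prod.ext ?_ ?_⟩
  · simpa using congrFun h (Fin.castAdd 2 i)
  · simpa using congrFun h (Fin.natAdd l 0)
  · simpa using congrFun h (Fin.natAdd l 1)

lemma intVec_add (f g : Fin l → ℤ) (p q : ℤ × ℤ) :
    intVec l (f + g) (p + q) = intVec l f p + intVec l g q :=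
  ext_castAdd_natAdd (by simp) (by simp) (by simp)

lemma intVec_sub (f g : Fin l → ℤ) (p q : ℤ × ℤ) :
    intVec l (f - g) (p - q) = intVec l f p - intVec l g q :=
  ext_castAdd_natAdd (by simp) (by simp) (by simp)

lemma intVec_smul (k : ℤ) (f : Fin l → ℤ) (p : ℤ × ℤ) :
    intVec l (k • f) (k • p) = (k : ℝ) • intVec l f p :=
  ext_castAdd_natAdd (by simp) (by simp) (by simp)

lemma castAdd_ne_natAdd (i : Fin l) (j : Fin 2) : Fin.castAdd 2 i ≠ Fin.natAdd l j := by
  simp only [ne_eq, Fin.ext_iff, Fin.val_castAdd, Fin.val_natAdd]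
  omega

lemma εv_eq_intVec (i : Fin l) : εv l i = intVec l (Pi.single i 1) 0 :=
  ext_castAdd_natAdd (fun i' => by simp [εv, Pi.single_apply])
    (by simp [εv, castAdd_ne_natAdd]) (by simp [εv, castAdd_ne_natAdd])

lemma av_eq_intVec : av l = intVec l 0 (1, 0) :=
  ext_castAdd_natAdd (by simp [av, (castAdd_ne_natAdd _ _).symm]) (by simp [av]) (by simp [av])

lemma bv_eq_intVec : bv l = intVec l 0 (0, 1) :=
  ext_castAdd_natAdd (by simp [bv, (castAdd_ne_natAdd _ _).symm]) (by simp [bv]) (by simp [bv])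

lemma av_ne_zero : av l ≠ 0 := by
  simp [av]

lemma intVec_single (i : Fin l) (s : ℤ) : intVec l (Pi.single i s) 0 = (s : ℝ) • εv l i := by
  rw [εv_eq_intVec, ← intVec_smul, smul_zero, ← Pi.single_smul, smul_eq_mul, mul_one]

lemma intVec_single_add_single (i j : Fin l) (s t : ℤ) :
    intVec l (Pi.single i s + Pi.single j t) 0 = (s : ℝ) • εv l i + (t : ℝ) • εv l j := by
  rw [← intVec_single, ← intVec_single, ← intVec_add, add_zero]

lemma intVec_zero_left (p : ℤ × ℤ) : intVec l 0 p = (p.1 : ℝ) • av l + (p.2 : ℝ) • bv l :=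
  ext_castAdd_natAdd (by simp [av, bv, (castAdd_ne_natAdd _ _).symm]) (by simp [av, bv])
    (by simp [av, bv])

lemma Iform_intVec (f g : Fin l → ℤ) (p q : ℤ × ℤ) :
    Iform l (intVec l f p) (intVec l g q) = ((f ⬝ᵥ g : ℤ) : ℝ) := by
  simp [Iform, dotProduct]

lemma Iform_intVec_ne_zero {f g : Fin l → ℤ} {p q : ℤ × ℤ} :
    Iform l (intVec l f p) (intVec l g q) ≠ 0 ↔ f ⬝ᵥ g ≠ 0 := by
  rw [Iform_intVec, Int.cast_ne_zero]

lemma reflV_intVec {f g : Fin l → ℤ} {p q : ℤ × ℤ} {k : ℤ} (hf : f ⬝ᵥ f ≠ 0)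
    (hk : k * (f ⬝ᵥ f) = 2 * (f ⬝ᵥ g)) :
    reflV l (intVec l f p) (intVec l g q) = intVec l (g - k • f) (q - k • p) := by
  have hcoef : 2 * Iform l (intVec l g q) (intVec l f p) /
      Iform l (intVec l f p) (intVec l f p) = k := by
    rw [Iform_intVec, Iform_intVec, dotProduct_comm g, div_eq_iff (by exact_mod_cast hf)]
    exact_mod_cast hk.symm
  rw [reflV, hcoef, intVec_sub, intVec_smul]

lemma reflV_reflV {α : V l} (hα : Iform l α α ≠ 0) (x : V l) : reflV l α (reflV l α x) = x := by
  have hlin : ∀ (y : V l) (c : ℝ), Iform l (y - c • α) α = Iform l y α - c * Iform l α α := by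
    intro y c
    simp [Iform, sub_mul, Finset.sum_sub_distrib, Finset.mul_sum, mul_assoc]
  simp only [reflV, hlin]
  have : 2 * (Iform l x α - 2 * Iform l x α / Iform l α α * Iform l α α) / Iform l α α =
      -(2 * Iform l x α / Iform l α α) := by
    field_simp
    ring
  rw [this]
  module

lemma mkQ_intVec (f : Fin l → ℤ) (p : ℤ × ℤ) :
    (Ga l).mkQ (intVec l f p) = (Ga l).mkQ (intVec l f (0, p.2)) := by
  rw [Submodule.mkQ_apply, Submodule.mkQ_apply, Submodule.Quotient.eq, ← intVec_sub, sub_self]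
  have : intVec l 0 (p - (0, p.2)) = (p.1 : ℝ) • av l := by simp [intVec_zero_left]
  rw [this]
  exact Submodule.smul_mem _ _ (Submodule.mem_span_singleton_self _)

def shortVecs (l : ℕ) : Set (Fin l → ℤ) := {f | f ⬝ᵥ f = 1}

def middleVecs (l : ℕ) : Set (Fin l → ℤ) := {f | f ⬝ᵥ f = 2}

def longVecs (l : ℕ) : Set (Fin l → ℤ) := {f | f ⬝ᵥ f = 4 ∧ ∀ i, 2 ∣ f i}

lemma single_one_mem_shortVecs (i : Fin l) : Pi.single i 1 ∈ shortVecs l := by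
  simp [shortVecs]

lemma single_two_mem_longVecs (i : Fin l) : Pi.single i 2 ∈ longVecs l := by
  refine ⟨by simp, fun j => ?_⟩
  rcases eq_or_ne j i with rfl | h <;> simp [*]

lemma BCs_eq : BCs l = (intVec l · 0) '' shortVecs l := by
  ext x
  simp only [BCs, Set.mem_iUnion, Set.mem_insert_iff, Set.mem_singleton_iff, Set.mem_image]
  constructor
  · rintro ⟨i, rfl | rfl⟩
    · exact ⟨Pi.single i 1, by simp [shortVecs], by simp [intVec_single]⟩
    · exact ⟨Pi.single i (-1), by simp [shortVecs], by simp [intVec_single]⟩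
  · rintro ⟨f, hf, rfl⟩
    obtain ⟨i, hs | hs, hfi⟩ := eq_single_of_dotProduct_self_eq_one hf <;>
      exact ⟨i, by rw [hfi, hs, intVec_single]; simp⟩

lemma BCm_eq : BCm l = (intVec l · 0) '' middleVecs l := by
  ext x
  simp only [BCm, Set.mem_iUnion, Set.mem_insert_iff, Set.mem_singleton_iff, Set.mem_image]
  constructor
  · rintro ⟨i, j, hij, rfl | rfl | rfl⟩
    · exact ⟨Pi.single i 1 + Pi.single j 1, by simp [middleVecs,
        dotProduct_self_single_add_single hij], by simp [intVec_single_add_single]⟩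
    · exact ⟨Pi.single i 1 + Pi.single j (-1), by simp [middleVecs,
        dotProduct_self_single_add_single hij], by simp [intVec_single_add_single, sub_eq_add_neg]⟩
    · exact ⟨Pi.single i (-1) + Pi.single j (-1), by simp [middleVecs,
        dotProduct_self_single_add_single hij], by simp [intVec_single_add_single, sub_eq_add_neg]⟩
  · rintro ⟨f, hf, rfl⟩
    obtain ⟨i, j, hij, hi | hi, hj | hj, hf⟩ := eq_single_add_single_of_dotProduct_self_eq_two hf <;>
      rw [hf, hi, hj, intVec_single_add_single]
    · exact ⟨i, j, hij, by simp⟩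
    · exact ⟨i, j, hij, by simp [sub_eq_add_neg]⟩
    · exact ⟨j, i, hij.symm, by simp [sub_eq_add_neg, add_comm]⟩
    · exact ⟨i, j, hij, by simp [sub_eq_add_neg]⟩

lemma BCl_eq : BCl l = (intVec l · 0) '' longVecs l := by
  ext x
  simp only [BCl, Set.mem_iUnion, Set.mem_insert_iff, Set.mem_singleton_iff, Set.mem_image]
  constructor
  · rintro ⟨i, rfl | rfl⟩
    · refine ⟨Pi.single i 2, ⟨by simp, fun j => ?_⟩, by simp [intVec_single]⟩
      rcases eq_or_ne j i with rfl | h <;> simp [*]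
    · refine ⟨Pi.single i (-2), ⟨by simp, fun j => ?_⟩, by simp [intVec_single]⟩
      rcases eq_or_ne j i with rfl | h <;> simp [*]
  · rintro ⟨f, ⟨hf, hev⟩, rfl⟩
    obtain ⟨g, hg, rfl⟩ := eq_two_smul_of_dotProduct_self_eq_four hf hev
    have h2g : intVec l ((2 : ℤ) • g) 0 = (2 : ℝ) • intVec l g 0 := by
      simpa using intVec_smul 2 g 0
    obtain ⟨i, hs | hs, hgi⟩ := eq_single_of_dotProduct_self_eq_one hg <;>
      exact ⟨i, by rw [h2g, hgi, hs, intVec_single]; simp⟩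

/-- `(R(BC_l)_s + Ls) ∪ (R(BC_l)_m + Lm) ∪ (R(BC_l)_l + Ll)`, where `(m, n) ∈ ℤ²` stands for
`m a + n b`. -/
def rootSet (l : ℕ) (Ls Lm Ll : Set (ℤ × ℤ)) : Set (V l) :=
  Set.image2 (intVec l) (shortVecs l) Ls ∪ Set.image2 (intVec l) (middleVecs l) Lm ∪
    Set.image2 (intVec l) (longVecs l) Ll

def IsRootDatum (Ls Lm Ll : Set (ℤ × ℤ)) (f : Fin l → ℤ) (p : ℤ × ℤ) : Prop :=
  f ∈ shortVecs l ∧ p ∈ Ls ∨ f ∈ middleVecs l ∧ p ∈ Lm ∨ f ∈ longVecs l ∧ p ∈ Ll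

/-- Reflecting a root `β` with radical part `q` in a root `α` with radical part `p` replaces `q`
by `q - k • p`, where `k = 2I(α,β)/I(α,α)`; `k` is even if `α` is short, and if `β` is long it is
divisible by `4` for short `α` and by `2` otherwise. -/
structure IsReflectionStable (Ls Lm Ll : Set (ℤ × ℤ)) : Prop where
  short : ∀ q ∈ Ls, ∀ p (k : ℤ), p ∈ Ls ∧ 2 ∣ k ∨ p ∈ Lm ∨ p ∈ Ll → q - k • p ∈ Ls
  middle : ∀ q ∈ Lm, ∀ p (k : ℤ), p ∈ Ls ∧ 2 ∣ k ∨ p ∈ Lm ∨ p ∈ Ll → q - k • p ∈ Lm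
  long : ∀ q ∈ Ll, ∀ p (k : ℤ), p ∈ Ls ∧ 4 ∣ k ∨ (p ∈ Lm ∨ p ∈ Ll) ∧ 2 ∣ k → q - k • p ∈ Ll

section RootSet

variable {Ls Lm Ll : Set (ℤ × ℤ)} {f g : Fin l → ℤ} {p q : ℤ × ℤ}

lemma mem_rootSet {x : V l} :
    x ∈ rootSet l Ls Lm Ll ↔ ∃ f p, IsRootDatum Ls Lm Ll f p ∧ intVec l f p = x := by
  simp only [rootSet, IsRootDatum, Set.mem_union, Set.mem_image2]
  constructor
  · rintro ((⟨f, hf, p, hp, rfl⟩ | ⟨f, hf, p, hp, rfl⟩) | ⟨f, hf, p, hp, rfl⟩)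
    exacts [⟨f, p, .inl ⟨hf, hp⟩, rfl⟩, ⟨f, p, .inr (.inl ⟨hf, hp⟩), rfl⟩,
      ⟨f, p, .inr (.inr ⟨hf, hp⟩), rfl⟩]
  · rintro ⟨f, p, ⟨hf, hp⟩ | ⟨hf, hp⟩ | ⟨hf, hp⟩, rfl⟩
    exacts [.inl (.inl ⟨f, hf, p, hp, rfl⟩), .inl (.inr ⟨f, hf, p, hp, rfl⟩),
      .inr ⟨f, hf, p, hp, rfl⟩]

lemma intVec_mem_rootSet : intVec l f p ∈ rootSet l Ls Lm Ll ↔ IsRootDatum Ls Lm Ll f p := by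
  refine mem_rootSet.trans ⟨?_, fun h => ⟨f, p, h, rfl⟩⟩
  rintro ⟨g, q, h, hgq⟩
  obtain ⟨rfl, rfl⟩ := intVec_injective hgq
  exact h

lemma IsRootDatum.dotProduct_self (h : IsRootDatum Ls Lm Ll f p) :
    f ⬝ᵥ f = 1 ∨ f ⬝ᵥ f = 2 ∨ f ⬝ᵥ f = 4 := by
  rcases h with ⟨hf, -⟩ | ⟨hf, -⟩ | ⟨⟨hf, -⟩, -⟩
  exacts [.inl hf, .inr (.inl hf), .inr (.inr hf)]

lemma IsRootDatum.exists_ne_zero (h : IsRootDatum Ls Lm Ll f p) : ∃ i, f i ≠ 0 :=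
  exists_ne_zero_of_dotProduct_self_pos (by rcases h.dotProduct_self with h | h | h <;> omega)

lemma IsRootDatum.exists_cartan (h : IsRootDatum Ls Lm Ll f p) (g : Fin l → ℤ) :
    ∃ k : ℤ, k * (f ⬝ᵥ f) = 2 * (f ⬝ᵥ g) ∧ (p ∈ Ls ∧ 2 ∣ k ∨ p ∈ Lm ∨ p ∈ Ll) ∧
      ((∀ i, 2 ∣ g i) → p ∈ Ls ∧ 4 ∣ k ∨ (p ∈ Lm ∨ p ∈ Ll) ∧ 2 ∣ k) := by
  have hg : (∀ i, 2 ∣ g i) → 2 ∣ f ⬝ᵥ g := fun hg => by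
    simpa [dotProduct_comm] using dvd_dotProduct_of_dvd_left hg f
  rcases h with ⟨hf, hp⟩ | ⟨hf, hp⟩ | ⟨⟨hf, hfev⟩, hp⟩
  · refine ⟨2 * (f ⬝ᵥ g), by rw [hf, mul_one], .inl ⟨hp, dvd_mul_right _ _⟩,
      fun hev => .inl ⟨hp, ?_⟩⟩
    have := hg hev
    omega
  · exact ⟨f ⬝ᵥ g, by rw [hf, mul_comm], .inr (.inl hp), fun hev => .inr ⟨.inl hp, hg hev⟩⟩
  · obtain ⟨m, hm⟩ := dvd_dotProduct_of_dvd_left hfev g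
    refine ⟨m, by rw [hf, hm]; ring, .inr (.inr hp), fun hev => .inr ⟨.inr hp, ?_⟩⟩
    have := mul_dvd_dotProduct hfev hev
    omega

lemma IsRootDatum.reflect (hS : IsReflectionStable Ls Lm Ll) {k : ℤ}
    (hk : k * (f ⬝ᵥ f) = 2 * (f ⬝ᵥ g)) (hsm : p ∈ Ls ∧ 2 ∣ k ∨ p ∈ Lm ∨ p ∈ Ll)
    (hlong : (∀ i, 2 ∣ g i) → p ∈ Ls ∧ 4 ∣ k ∨ (p ∈ Lm ∨ p ∈ Ll) ∧ 2 ∣ k)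
    (h : IsRootDatum Ls Lm Ll g q) : IsRootDatum Ls Lm Ll (g - k • f) (q - k • p) := by
  have hnorm := dotProduct_sub_smul_self hk
  rcases h with ⟨hg, hq⟩ | ⟨hg, hq⟩ | ⟨⟨hg, hgev⟩, hq⟩
  · exact .inl ⟨hnorm.trans hg, hS.short q hq p k hsm⟩
  · exact .inr (.inl ⟨hnorm.trans hg, hS.middle q hq p k hsm⟩)
  · have hk2 : 2 ∣ k := by
      rcases hlong hgev with ⟨-, h⟩ | ⟨-, h⟩
      exacts [dvd_trans ⟨2, rfl⟩ h, h]
    refine .inr (.inr ⟨⟨hnorm.trans hg, fun i => ?_⟩, hS.long q hq p k (hlong hgev)⟩)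
    simpa using dvd_sub (hgev i) (hk2.mul_right (f i))

lemma reflV_mem_rootSet (hS : IsReflectionStable Ls Lm Ll) {α β : V l}
    (hα : α ∈ rootSet l Ls Lm Ll) (hβ : β ∈ rootSet l Ls Lm Ll) :
    reflV l α β ∈ rootSet l Ls Lm Ll := by
  obtain ⟨f, p, hfp, rfl⟩ := mem_rootSet.mp hα
  obtain ⟨g, q, hgq, rfl⟩ := mem_rootSet.mp hβ
  obtain ⟨k, hk, hsm, hlong⟩ := hfp.exists_cartan g
  rw [reflV_intVec (by rcases hfp.dotProduct_self with h | h | h <;> omega) hk]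
  exact intVec_mem_rootSet.mpr (hgq.reflect hS hk hsm hlong)

lemma Iform_self_ne_zero_of_mem_rootSet {α : V l} (hα : α ∈ rootSet l Ls Lm Ll) :
    Iform l α α ≠ 0 := by
  obtain ⟨f, p, hfp, rfl⟩ := mem_rootSet.mp hα
  rw [Iform_intVec_ne_zero]
  rcases hfp.dotProduct_self with h | h | h <;> omega

lemma transGen_rootSet (hLm : Lm.Nonempty) (hLl : Ll.Nonempty) :
    ∀ x ∈ rootSet l Ls Lm Ll, ∀ y ∈ rootSet l Ls Lm Ll,
      Relation.TransGen (fun u v => v ∈ rootSet l Ls Lm Ll ∧ Iform l u v ≠ 0) x y := by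
  obtain ⟨pm, hpm⟩ := hLm
  obtain ⟨pl, hpl⟩ := hLl
  have hμ : ∀ i, intVec l (Pi.single i 2) pl ∈ rootSet l Ls Lm Ll := fun i =>
    intVec_mem_rootSet.mpr (.inr (.inr ⟨single_two_mem_longVecs i, hpl⟩))
  have hμμ : ∀ i j, Relation.ReflTransGen
      (fun u v => v ∈ rootSet l Ls Lm Ll ∧ Iform l u v ≠ 0)
      (intVec l (Pi.single i 2) pl) (intVec l (Pi.single j 2) pl) := by
    intro i j
    rcases eq_or_ne i j with rfl | hij
    · exact .refl
    have hν : intVec l (Pi.single i 1 + Pi.single j 1) pm ∈ rootSet l Ls Lm Ll :=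
      intVec_mem_rootSet.mpr (.inr (.inl ⟨by
        simp [middleVecs, dotProduct_self_single_add_single hij], hpm⟩))
    refine (Relation.ReflTransGen.single ⟨hν, ?_⟩).tail ⟨hμ j, ?_⟩ <;>
      simp [Iform_intVec_ne_zero, dotProduct_add, hij.symm]
  intro x hx y hy
  obtain ⟨f, p, hfp, rfl⟩ := mem_rootSet.mp hx
  obtain ⟨g, q, hgq, rfl⟩ := mem_rootSet.mp hy
  obtain ⟨i, hi⟩ := hfp.exists_ne_zero
  obtain ⟨j, hj⟩ := hgq.exists_ne_zero
  exact .head' ⟨hμ i, by simpa [Iform_intVec_ne_zero] using hi⟩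
    ((hμμ i j).tail ⟨hy, by simpa [Iform_intVec_ne_zero] using hj⟩)

lemma span_rootSet_eq_top (hl : 1 ≤ l) (h10 : ((1, 0) : ℤ × ℤ) ∈ Ls)
    (h01 : ((0, 1) : ℤ × ℤ) ∈ Ls) (h11 : ((1, 1) : ℤ × ℤ) ∈ Ls) :
    Submodule.span ℝ (rootSet l Ls Lm Ll) = ⊤ := by
  set S := Submodule.span ℝ (rootSet l Ls Lm Ll)
  have hroot : ∀ i p, p ∈ Ls → intVec l (Pi.single i 1) p ∈ S := fun i p hp =>
    Submodule.subset_span (intVec_mem_rootSet.mpr (.inl ⟨single_one_mem_shortVecs i, hp⟩))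
  have hrad : ∀ p ∈ Ls, ∀ q ∈ Ls, intVec l 0 (p - q) ∈ S := fun p hp q hq => by
    simpa [← intVec_sub] using sub_mem (hroot ⟨0, hl⟩ p hp) (hroot ⟨0, hl⟩ q hq)
  have hav : av l ∈ S := by simpa [av_eq_intVec] using hrad _ h11 _ h01
  have hbv : bv l ∈ S := by simpa [bv_eq_intVec] using hrad _ h11 _ h10
  have hεv : ∀ i, εv l i ∈ S := fun i => by
    have : εv l i = intVec l (Pi.single i 1) (1, 0) - av l := by
      rw [εv_eq_intVec, av_eq_intVec, ← intVec_sub, sub_zero, sub_self]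
    exact this ▸ sub_mem (hroot i _ h10) hav
  rw [eq_top_iff, ← (Pi.basisFun ℝ (Fin (l + 2))).span_eq, Submodule.span_le]
  rintro _ ⟨j, rfl⟩
  rw [Pi.basisFun_apply]
  refine Fin.addCases (fun i => hεv i) (fun j => ?_) j
  fin_cases j
  exacts [hav, hbv]

theorem isERS_rootSet (hl : 1 ≤ l) (hS : IsReflectionStable Ls Lm Ll)
    (h10 : ((1, 0) : ℤ × ℤ) ∈ Ls) (h01 : ((0, 1) : ℤ × ℤ) ∈ Ls) (h11 : ((1, 1) : ℤ × ℤ) ∈ Ls)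
    (hLm : Lm.Nonempty) (hLl : Ll.Nonempty) :
    IsERS l (rootSet l Ls Lm Ll) where
  discrete x hx := ⟨1, one_pos, fun y hy hxy => by
    obtain ⟨f, p, -, rfl⟩ := mem_rootSet.mp hx
    obtain ⟨g, q, -, rfl⟩ := mem_rootSet.mp hy
    exact (eq_of_norm_sub_lt_one (fun _ => ⟨_, rfl⟩) (fun _ => ⟨_, rfl⟩) hxy).symm⟩
  spans := span_rootSet_eq_top hl h10 h01 h11
  nonisotropic _ hα := Iform_self_ne_zero_of_mem_rootSet hα
  integral α hα β hβ := by
    obtain ⟨f, p, hfp, rfl⟩ := mem_rootSet.mp hα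
    obtain ⟨g, q, -, rfl⟩ := mem_rootSet.mp hβ
    obtain ⟨k, hk, -⟩ := hfp.exists_cartan g
    exact ⟨k, by rw [Iform_intVec, Iform_intVec]; exact_mod_cast hk.symm⟩
  reflects α hα := by
    refine (Set.image_subset_iff.mpr fun β hβ => reflV_mem_rootSet hS hα hβ).antisymm
      fun x hx => ⟨reflV l α x, reflV_mem_rootSet hS hα hx, reflV_reflV ?_ x⟩
    exact Iform_self_ne_zero_of_mem_rootSet hα
  irred := irred_of_transGen (Iform l) (transGen_rootSet hLm hLl)

lemma isReducedRS_rootSet (h : ∀ p ∈ Ls, (2 : ℤ) • p ∉ Ll) :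
    IsReducedRS l (rootSet l Ls Lm Ll) := by
  intro α hα h2α
  obtain ⟨f, p, hfp, rfl⟩ := mem_rootSet.mp hα
  rw [← Int.cast_two, ← intVec_smul, intVec_mem_rootSet] at h2α
  have hnorm : ((2 : ℤ) • f) ⬝ᵥ ((2 : ℤ) • f) = 4 * (f ⬝ᵥ f) := by
    simp only [smul_dotProduct, dotProduct_smul, smul_eq_mul]
    ring
  have h2 := h2α.dotProduct_self
  rcases hfp with ⟨-, hp⟩ | ⟨hf, -⟩ | ⟨⟨hf, -⟩, -⟩
  · rcases h2α with ⟨h2, -⟩ | ⟨h2, -⟩ | ⟨-, h2p⟩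
    · exact absurd (hnorm ▸ h2 : 4 * (f ⬝ᵥ f) = 1) (by omega)
    · exact absurd (hnorm ▸ h2 : 4 * (f ⬝ᵥ f) = 2) (by omega)
    · exact h p hp h2p
  · change f ⬝ᵥ f = 2 at hf
    rw [hnorm] at h2
    omega
  · rw [hnorm] at h2
    omega

lemma isMarking_rootSet (hl : 1 ≤ l) (h01 : ((0, 1) : ℤ × ℤ) ∈ Ls)
    (h11 : ((1, 1) : ℤ × ℤ) ∈ Ls) : IsMarking l (rootSet l Ls Lm Ll) (Ga l) := by
  refine ⟨Submodule.span_mono (by simp), finrank_span_singleton av_ne_zero, av l, av_ne_zero,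
    Submodule.mem_span_singleton_self _, ?_⟩
  have hroot : ∀ p ∈ Ls, intVec l (Pi.single ⟨0, hl⟩ 1) p ∈ AddSubgroup.closure
      (rootSet l Ls Lm Ll) := fun p hp => AddSubgroup.subset_closure
    (intVec_mem_rootSet.mpr (.inl ⟨single_one_mem_shortVecs _, hp⟩))
  simpa [← intVec_sub, av_eq_intVec] using sub_mem (hroot _ h11) (hroot _ h01)

lemma quotNonReduced_rootSet (hl : 1 ≤ l) (hp : p ∈ Ls) (hq : q ∈ Ll) (hpq : q.2 = 2 * p.2) :
    QuotNonReduced l (rootSet l Ls Lm Ll) (Ga l) := by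
  refine ⟨_, intVec_mem_rootSet.mpr (.inl ⟨single_one_mem_shortVecs ⟨0, hl⟩, hp⟩),
    _, intVec_mem_rootSet.mpr (.inr (.inr ⟨single_two_mem_longVecs ⟨0, hl⟩, hq⟩)), ?_⟩
  have h2 : (2 : ℝ) • intVec l (Pi.single ⟨0, hl⟩ 1) (0, p.2) =
      intVec l (Pi.single ⟨0, hl⟩ 2) (0, q.2) := by
    rw [hpq, ← Int.cast_two (R := ℝ), ← intVec_smul, ← Pi.single_smul]
    simp
  rw [mkQ_intVec, mkQ_intVec _ p, ← map_smul, h2]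

end RootSet

lemma mkQ_image_image2_intVec (N : Set (Fin l → ℤ)) {L L' : Set (ℤ × ℤ)}
    (h : Prod.snd '' L = Prod.snd '' L') :
    (Ga l).mkQ '' Set.image2 (intVec l) N L = (Ga l).mkQ '' Set.image2 (intVec l) N L' := by
  have key : ∀ L : Set (ℤ × ℤ), (Ga l).mkQ '' Set.image2 (intVec l) N L =
      Set.image2 (fun f n => (Ga l).mkQ (intVec l f (0, n))) N (Prod.snd '' L) := by
    intro L
    rw [Set.image_image2, Set.image2_image_right]
    exact Set.image2_congr fun f _ p _ => mkQ_intVec f p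
  rw [key, key, h]

lemma mkQ_image_rootSet {Ls Lm Ll Ls' Lm' Ll' : Set (ℤ × ℤ)}
    (hs : Prod.snd '' Ls = Prod.snd '' Ls') (hm : Prod.snd '' Lm = Prod.snd '' Lm')
    (hl : Prod.snd '' Ll = Prod.snd '' Ll') :
    (Ga l).mkQ '' rootSet l Ls Lm Ll = (Ga l).mkQ '' rootSet l Ls' Lm' Ll' := by
  simp only [rootSet, Set.image_union, mkQ_image_image2_intVec _ hs, mkQ_image_image2_intVec _ hm,
    mkQ_image_image2_intVec _ hl]

def lattice (a b : ℤ) : Set (ℤ × ℤ) := {p | a ∣ p.1 ∧ b ∣ p.2}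

def L11 : Set (ℤ × ℤ) := {p | 2 ∣ (p.1 - 1) * (p.2 - 1)}

lemma mem_lattice_one (p : ℤ × ℤ) : p ∈ lattice 1 1 :=
  ⟨one_dvd _, one_dvd _⟩

lemma lattice_subset {a b a' b' : ℤ} (ha : a ∣ a') (hb : b ∣ b') : lattice a' b' ⊆ lattice a b :=
  fun _ hp => ⟨ha.trans hp.1, hb.trans hp.2⟩

lemma sub_mem_lattice {a b : ℤ} {p q : ℤ × ℤ} (hp : p ∈ lattice a b) (hq : q ∈ lattice a b) :
    p - q ∈ lattice a b :=
  ⟨dvd_sub hp.1 hq.1, dvd_sub hp.2 hq.2⟩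

lemma zsmul_mem_lattice {m k a b : ℤ} (hk : m ∣ k) {p : ℤ × ℤ} (hp : p ∈ lattice a b) :
    k • p ∈ lattice (m * a) (m * b) :=
  ⟨mul_dvd_mul hk hp.1, mul_dvd_mul hk hp.2⟩

lemma sub_mem_L11 {p q : ℤ × ℤ} (hp : p ∈ L11) (hq : q ∈ lattice 2 2) : p - q ∈ L11 := by
  obtain ⟨⟨a, ha⟩, ⟨b, hb⟩⟩ := hq
  rcases Int.prime_two.dvd_mul.mp hp with h | h
  · exact (show (2 : ℤ) ∣ (p - q).1 - 1 by simp only [Prod.fst_sub]; omega).mul_right _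
  · exact (show (2 : ℤ) ∣ (p - q).2 - 1 by simp only [Prod.snd_sub]; omega).mul_left _

lemma snd_image_lattice (a b : ℤ) : Prod.snd '' lattice a b = {n | b ∣ n} := by
  ext n
  exact ⟨fun ⟨p, hp, hpn⟩ => hpn ▸ hp.2, fun hn => ⟨(0, n), ⟨dvd_zero a, hn⟩, rfl⟩⟩

lemma snd_image_L11 : Prod.snd '' L11 = Set.univ :=
  Set.eq_univ_of_forall fun n => ⟨(1, n), by simp [L11], rfl⟩

lemma image_add_image_intVec (N : Set (Fin l → ℤ)) (L : Set (ℤ × ℤ)) :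
    (intVec l · 0) '' N + intVec l 0 '' L = Set.image2 (intVec l) N L := by
  rw [← Set.image2_add, Set.image2_image_left, Set.image2_image_right]
  congr! 2 with f p
  rw [← intVec_add, add_zero, zero_add]

lemma Zb_eq (k : ℤ) : Zb l k = intVec l 0 '' lattice 0 k := by
  ext x
  simp only [Zb, Zv, lattice, Set.mem_ofPred_eq, Set.mem_image, zero_dvd_iff, Prod.exists]
  constructor
  · rintro ⟨n, rfl⟩
    exact ⟨0, k * n, ⟨rfl, dvd_mul_right k n⟩, by simp [intVec_zero_left]⟩
  · rintro ⟨_, _, ⟨rfl, n, rfl⟩, rfl⟩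
    exact ⟨n, by simp [intVec_zero_left]⟩

lemma Zb_add_Za (ka kb : ℤ) : Zb l kb + Za l ka = intVec l 0 '' lattice ka kb := by
  ext x
  simp only [Zb, Za, Zv, lattice, Set.mem_add, Set.mem_ofPred_eq, Set.mem_image, Prod.exists]
  constructor
  · rintro ⟨_, ⟨n, rfl⟩, _, ⟨m, rfl⟩, rfl⟩
    exact ⟨ka * m, kb * n, ⟨dvd_mul_right _ _, dvd_mul_right _ _⟩,
      by rw [intVec_zero_left, add_comm]⟩
  · rintro ⟨_, _, ⟨⟨m, rfl⟩, n, rfl⟩, rfl⟩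
    exact ⟨_, ⟨n, rfl⟩, _, ⟨m, rfl⟩, by rw [intVec_zero_left, add_comm]⟩

lemma Lset_one_eq : Lset l 1 1 1 1 = intVec l 0 '' L11 := by
  ext x
  simp only [Lset, L11, one_mul, Set.mem_ofPred_eq, Set.mem_image, Prod.exists]
  constructor
  · rintro ⟨m, n, h, rfl⟩
    exact ⟨m, n, h, intVec_zero_left _⟩
  · rintro ⟨m, n, h, rfl⟩
    exact ⟨m, n, h, intVec_zero_left _⟩

lemma RBC11star_eq : RBC11star l = rootSet l (lattice 1 1) (lattice 1 1) L11 := by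
  rw [RBC11star, AffS, AffM, tfm, add_assoc, add_assoc, Zb_add_Za, Lset_one_eq,
    BCs_eq, BCm_eq, BCl_eq, image_add_image_intVec, image_add_image_intVec,
    image_add_image_intVec, rootSet]

lemma RBC44star_eq : RBC44star l = rootSet l L11 (lattice 2 2) (lattice 4 4) := by
  rw [RBC44star, AffM, AffL, tfm, tfl, add_assoc, add_assoc, Zb_add_Za, Zb_add_Za, Lset_one_eq,
    BCs_eq, BCm_eq, BCl_eq, image_add_image_intVec, image_add_image_intVec,
    image_add_image_intVec, rootSet]

lemma Aff_eq (X : AffType) :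
    Aff l X = rootSet l (lattice 0 1) (lattice 0 (tfm X)) (lattice 0 (tfl X)) := by
  rw [Aff, AffS, AffM, AffL, Zb_eq, Zb_eq, Zb_eq, BCs_eq, BCm_eq, BCl_eq,
    image_add_image_intVec, image_add_image_intVec, image_add_image_intVec, rootSet]

lemma isReflectionStable_BC11 : IsReflectionStable (lattice 1 1) (lattice 1 1) L11 where
  short _ _ _ _ _ := mem_lattice_one _
  middle _ _ _ _ _ := mem_lattice_one _
  long q hq p k hk := by
    have h2 : 2 ∣ k := by rcases hk with ⟨-, h⟩ | ⟨-, h⟩; exacts [dvd_trans ⟨2, rfl⟩ h, h]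
    exact sub_mem_L11 hq (zsmul_mem_lattice h2 (mem_lattice_one p))

lemma two_zsmul_notMem_L11 (p : ℤ × ℤ) : (2 : ℤ) • p ∉ L11 := by
  intro h
  rcases Int.prime_two.dvd_mul.mp h with h | h <;> simp at h <;> omega

lemma zsmul_mem_lattice_two {Ls : Set (ℤ × ℤ)} {p : ℤ × ℤ} {k : ℤ}
    (h : p ∈ Ls ∧ 2 ∣ k ∨ p ∈ lattice 2 2 ∨ p ∈ lattice 4 4) : k • p ∈ lattice 2 2 := by
  rcases h with ⟨-, hk⟩ | hp | hp
  · exact zsmul_mem_lattice hk (mem_lattice_one p)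
  · simpa using zsmul_mem_lattice (one_dvd k) hp
  · simpa using zsmul_mem_lattice (one_dvd k) (lattice_subset (by norm_num) (by norm_num) hp)

lemma isReflectionStable_BC44 : IsReflectionStable L11 (lattice 2 2) (lattice 4 4) where
  short _ hq _ _ hk := sub_mem_L11 hq (zsmul_mem_lattice_two hk)
  middle _ hq _ _ hk := sub_mem_lattice hq (zsmul_mem_lattice_two hk)
  long q hq p k hk := by
    refine sub_mem_lattice hq ?_
    rcases hk with ⟨-, hk⟩ | ⟨hp | hp, hk⟩
    · exact zsmul_mem_lattice hk (mem_lattice_one p)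
    · exact zsmul_mem_lattice hk hp
    · exact zsmul_mem_lattice hk (lattice_subset (a := 2) (b := 2) (by norm_num) (by norm_num) hp)

lemma two_zsmul_notMem_lattice_four {p : ℤ × ℤ} (hp : p ∈ L11) : (2 : ℤ) • p ∉ lattice 4 4 := by
  rintro ⟨h1, h2⟩
  simp only [Prod.smul_fst, Prod.smul_snd, smul_eq_mul] at h1 h2
  rcases Int.prime_two.dvd_mul.mp hp with h | h <;> omega

end ReducedStar

end

open ReducedStar

noncomputable section

/-- **Well-definedness of the reduced ∗-types (Azam's systems)** `BC_l^{(1,1)∗}` and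
`BC_l^{(4,4)∗}`. -/
theorem reduced_star_well_defined {l : ℕ} (hl : 1 ≤ l) :
    (IsERS l (RBC11star l) ∧ IsReducedRS l (RBC11star l) ∧
      IsMarking l (RBC11star l) (Ga l) ∧
      (Ga l).mkQ '' RBC11star l = (Ga l).mkQ '' Aff l .BCC ∧
      QuotNonReduced l (RBC11star l) (Ga l)) ∧
    (IsERS l (RBC44star l) ∧ IsReducedRS l (RBC44star l) ∧
      IsMarking l (RBC44star l) (Ga l) ∧
      (Ga l).mkQ '' RBC44star l = (Ga l).mkQ '' Aff l .CvBC ∧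
      QuotNonReduced l (RBC44star l) (Ga l)) := by
  have h1 := mem_lattice_one
  have h10 : ((1, 0) : ℤ × ℤ) ∈ L11 := by simp [L11]
  have h01 : ((0, 1) : ℤ × ℤ) ∈ L11 := by simp [L11]
  have h11 : ((1, 1) : ℤ × ℤ) ∈ L11 := by simp [L11]
  have h0 : ∀ k, ((0, 0) : ℤ × ℤ) ∈ lattice k k := fun k => ⟨dvd_zero k, dvd_zero k⟩
  rw [RBC11star_eq, RBC44star_eq, Aff_eq, Aff_eq]
  refine ⟨⟨isERS_rootSet hl isReflectionStable_BC11 (h1 _) (h1 _) (h1 _) ⟨0, h1 0⟩ ⟨_, h11⟩,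
      isReducedRS_rootSet fun p _ => two_zsmul_notMem_L11 p, isMarking_rootSet hl (h1 _) (h1 _),
      mkQ_image_rootSet ?_ ?_ ?_, quotNonReduced_rootSet hl (h1 0) h10 rfl⟩,
    ⟨isERS_rootSet hl isReflectionStable_BC44 h10 h01 h11 ⟨_, h0 2⟩ ⟨_, h0 4⟩,
      isReducedRS_rootSet fun p hp => two_zsmul_notMem_lattice_four hp,
      isMarking_rootSet hl h01 h11, mkQ_image_rootSet ?_ ?_ ?_,
      quotNonReduced_rootSet hl h10 (h0 4) rfl⟩⟩ <;>
    simp [snd_image_lattice, snd_image_L11, tfm, tfl]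

end
end

section
/- Well-definedness of the non-reduced classical types: For each X_l ∈ {BCC_l, C^∨BC_l, BB_l^∨ (requiring l ≥ 2), C^∨C_l}, each of the sets R(X_l^{(1)}) = R(X_l) + ℤa, R(X_l^{(2)}(i)) = (R(X_l)_s + ℤa) ∪ (R(X_l)_m + iℤa) ∪ (R(X_l)_l + 2ℤa) (i = 1,2), and R(X_l^{(4)}) = (R(X_l)_s + ℤa) ∪ (R(X_l)_m + 2ℤa) ∪ (R(X_l)_l + 4ℤa) is a non-reduced elliptic root system in (F,I), ℝa is a marking of it, and its quotient modulo ℝa equals the image of R(X_l) in F/ℝa. -/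
open Pointwise

noncomputable section
namespace NRC
variable {l : ℕ}

lemma Iform_add_left (x y z : V l) : Iform l (x + y) z = Iform l x z + Iform l y z := by
  simp [Iform, add_mul, Finset.sum_add_distrib]

lemma Iform_smul_left (c : ℝ) (x y : V l) : Iform l (c • x) y = c * Iform l x y := by
  simp [Iform, Finset.mul_sum, mul_assoc]

lemma Iform_neg_left (x y : V l) : Iform l (-x) y = - Iform l x y := by
  simp [Iform]

lemma Iform_sub_left (x y z : V l) : Iform l (x - y) z = Iform l x z - Iform l y z := by
  simp [Iform, sub_mul, Finset.sum_sub_distrib]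

lemma Iform_comm (x y : V l) : Iform l x y = Iform l y x := by
  simp [Iform, mul_comm]

lemma Iform_add_right (x y z : V l) : Iform l x (y + z) = Iform l x y + Iform l x z := by
  rw [Iform_comm, Iform_add_left, Iform_comm y x, Iform_comm z x]

lemma Iform_smul_right (c : ℝ) (x y : V l) : Iform l x (c • y) = c * Iform l x y := by
  rw [Iform_comm, Iform_smul_left, Iform_comm]

lemma Iform_sub_right (x y z : V l) : Iform l x (y - z) = Iform l x y - Iform l x z := by
  rw [Iform_comm, Iform_sub_left, Iform_comm y x, Iform_comm z x]

lemma Iform_neg_right (x y : V l) : Iform l x (-y) = - Iform l x y := by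
  rw [Iform_comm, Iform_neg_left, Iform_comm]

lemma εv_apply (i k : Fin l) : εv l i (Fin.castAdd 2 k) = if i = k then 1 else 0 := by
  unfold εv
  rw [Pi.single_apply]
  congr 1
  simp [Fin.ext_iff, eq_comm]

lemma av_apply (k : Fin l) : av l (Fin.castAdd 2 k) = 0 := by
  apply Pi.single_eq_of_ne
  simp [Fin.ext_iff]; omega

lemma bv_apply (k : Fin l) : bv l (Fin.castAdd 2 k) = 0 := by
  apply Pi.single_eq_of_ne
  simp [Fin.ext_iff]; omega

lemma Iform_av_left (y : V l) : Iform l (av l) y = 0 := by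
  simp [Iform, av_apply]

lemma Iform_bv_left (y : V l) : Iform l (bv l) y = 0 := by
  simp [Iform, bv_apply]

lemma Iform_av_right (x : V l) : Iform l x (av l) = 0 := by
  rw [Iform_comm]; exact Iform_av_left x

lemma Iform_bv_right (x : V l) : Iform l x (bv l) = 0 := by
  rw [Iform_comm]; exact Iform_bv_left x

lemma Iform_eps (i j : Fin l) : Iform l (εv l i) (εv l j) = if i = j then 1 else 0 := by
  unfold Iform
  simp only [εv_apply]
  rw [Finset.sum_eq_single i]
  · by_cases h : i = j <;> simp [h, eq_comm]
  · intro k _ hk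
    simp [Ne.symm hk]
  · simp

/-- `Iform` ignores radical shifts. -/
lemma Iform_shift (v w : V l) (m n m' n' : ℝ) :
    Iform l (v + m • av l + n • bv l) (w + m' • av l + n' • bv l) = Iform l v w := by
  simp [Iform_add_left, Iform_add_right, Iform_smul_left, Iform_smul_right,
    Iform_av_left, Iform_bv_left, Iform_av_right, Iform_bv_right]

end NRC
namespace NRC
variable {l : ℕ}

lemma sq_one_cases {s : ℤ} (h : s * s = 1) : s = 1 ∨ s = -1 := by
  have := Int.eq_one_or_neg_one_of_mul_eq_one' h
  tauto

lemma mem_BCs_iff {v : V l} :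
    v ∈ BCs l ↔ ∃ (i : Fin l) (s : ℤ), s * s = 1 ∧ v = (s : ℝ) • εv l i := by
  constructor
  · intro hv
    rw [BCs, Set.mem_iUnion] at hv
    obtain ⟨i, hi⟩ := hv
    rcases hi with h | h
    · exact ⟨i, 1, by norm_num, by simp [h]⟩
    · exact ⟨i, -1, by norm_num, by simp at h; simp [h]⟩
  · rintro ⟨i, s, hs, rfl⟩
    rw [BCs, Set.mem_iUnion]
    rcases sq_one_cases hs with rfl | rfl
    · exact ⟨i, by simp⟩
    · exact ⟨i, by simp⟩

lemma mem_BCl_iff {v : V l} :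
    v ∈ BCl l ↔ ∃ (i : Fin l) (s : ℤ), s * s = 1 ∧ v = ((2 * s : ℤ) : ℝ) • εv l i := by
  constructor
  · intro hv
    rw [BCl, Set.mem_iUnion] at hv
    obtain ⟨i, hi⟩ := hv
    rcases hi with h | h
    · exact ⟨i, 1, by norm_num, by rw [h]; norm_num⟩
    · refine ⟨i, -1, by norm_num, ?_⟩
      simp at h
      rw [h]; push_cast; rw [neg_smul]
  · rintro ⟨i, s, hs, rfl⟩
    rw [BCl, Set.mem_iUnion]
    rcases sq_one_cases hs with rfl | rfl
    · exact ⟨i, by norm_num⟩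
    · refine ⟨i, Or.inr ?_⟩
      push_cast
      rw [neg_smul]
      norm_num

lemma mem_BCm_iff {v : V l} :
    v ∈ BCm l ↔ ∃ (i j : Fin l) (s t : ℤ), i ≠ j ∧ s * s = 1 ∧ t * t = 1 ∧
      v = (s : ℝ) • εv l i + (t : ℝ) • εv l j := by
  constructor
  · intro hv
    rw [BCm] at hv
    simp only [Set.mem_iUnion] at hv
    obtain ⟨i, j, hij, hm⟩ := hv
    rcases hm with h | h | h
    · exact ⟨i, j, 1, 1, hij, by norm_num, by norm_num, by simp [h]⟩
    · refine ⟨i, j, 1, -1, hij, by norm_num, by norm_num, ?_⟩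
      rw [h]; push_cast; rw [one_smul, neg_smul, one_smul, sub_eq_add_neg]
    · refine ⟨i, j, -1, -1, hij, by norm_num, by norm_num, ?_⟩
      simp at h
      rw [h]; push_cast; rw [neg_smul, neg_smul, one_smul, one_smul]; abel
  · rintro ⟨i, j, s, t, hij, hs, ht, rfl⟩
    rw [BCm]
    simp only [Set.mem_iUnion]
    rcases sq_one_cases hs with rfl | rfl <;> rcases sq_one_cases ht with rfl | rfl
    · exact ⟨i, j, hij, by push_cast; rw [one_smul, one_smul]; left; rfl⟩
    · refine ⟨i, j, hij, ?_⟩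
      push_cast
      rw [one_smul, neg_smul, one_smul]
      right; left; rw [sub_eq_add_neg]
    · refine ⟨j, i, hij.symm, ?_⟩
      push_cast
      rw [one_smul, neg_smul, one_smul]
      right; left; rw [sub_eq_add_neg]; abel
    · refine ⟨i, j, hij, ?_⟩
      push_cast
      rw [neg_smul, neg_smul, one_smul, one_smul]
      right; right
      show _ = -εv l i - εv l j
      abel

lemma Iform_BCs {v : V l} (hv : v ∈ BCs l) : Iform l v v = 1 := by
  obtain ⟨i, s, hs, rfl⟩ := mem_BCs_iff.1 hv
  rw [Iform_smul_left, Iform_smul_right, Iform_eps]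
  simp
  exact_mod_cast congrArg (fun z : ℤ => (z : ℝ)) hs

lemma Iform_BCm {v : V l} (hv : v ∈ BCm l) : Iform l v v = 2 := by
  obtain ⟨i, j, s, t, hij, hs, ht, rfl⟩ := mem_BCm_iff.1 hv
  simp only [Iform_add_left, Iform_add_right, Iform_smul_left, Iform_smul_right, Iform_eps]
  have hs' : (s : ℝ) * s = 1 := by exact_mod_cast hs
  have ht' : (t : ℝ) * t = 1 := by exact_mod_cast ht
  simp [hij, hij.symm]
  nlinarith [hs', ht']

lemma Iform_BCl {v : V l} (hv : v ∈ BCl l) : Iform l v v = 4 := by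
  obtain ⟨i, s, hs, rfl⟩ := mem_BCl_iff.1 hv
  rw [Iform_smul_left, Iform_smul_right, Iform_eps]
  have hs' : (s : ℝ) * s = 1 := by exact_mod_cast hs
  simp
  nlinarith [hs']

lemma not_BCs_BCm {v : V l} (h1 : v ∈ BCs l) (h2 : v ∈ BCm l) : False := by
  have := Iform_BCs h1; rw [Iform_BCm h2] at this; norm_num at this

lemma not_BCs_BCl {v : V l} (h1 : v ∈ BCs l) (h2 : v ∈ BCl l) : False := by
  have := Iform_BCs h1; rw [Iform_BCl h2] at this; norm_num at this

lemma not_BCm_BCl {v : V l} (h1 : v ∈ BCm l) (h2 : v ∈ BCl l) : False := by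
  have := Iform_BCm h1; rw [Iform_BCl h2] at this; norm_num at this

end NRC
namespace NRC
variable {l : ℕ}

lemma sq1_neg {s : ℤ} (h : s * s = 1) : (-s) * (-s) = 1 := by linear_combination h

lemma sq1_mul {s t : ℤ} (hs : s * s = 1) (ht : t * t = 1) : (s * t) * (s * t) = 1 := by
  linear_combination t * t * hs + ht

lemma BC_key (v w : V l) (hv : v ∈ BCs l ∨ v ∈ BCm l ∨ v ∈ BCl l)
    (hw : w ∈ BCs l ∨ w ∈ BCm l ∨ w ∈ BCl l) :
    ∃ c : ℤ, 2 * Iform l w v = (c : ℝ) * Iform l v v ∧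
      (w ∈ BCs l → w - (c : ℝ) • v ∈ BCs l) ∧
      (w ∈ BCm l → w - (c : ℝ) • v ∈ BCm l) ∧
      (w ∈ BCl l → w - (c : ℝ) • v ∈ BCl l) ∧
      (v ∈ BCs l → 2 ∣ c) ∧
      (v ∈ BCs l → w ∈ BCl l → 4 ∣ c) ∧
      (v ∈ BCm l → w ∈ BCl l → 2 ∣ c) := by
  rcases hv with hv | hv | hv
  · -- v short
    obtain ⟨i, s, hs, rfl⟩ := mem_BCs_iff.1 hv
    rcases hw with hw | hw | hw
    · -- w short
      obtain ⟨j, t, ht, rfl⟩ := mem_BCs_iff.1 hw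
      by_cases hji : j = i
      · subst hji
        refine ⟨2 * t * s, ?_, fun _ => mem_BCs_iff.2 ⟨j, -t, sq1_neg ht, ?_⟩,
          fun h => (not_BCs_BCm hw h).elim, fun h => (not_BCs_BCl hw h).elim,
          fun _ => ⟨t * s, by ring⟩, fun _ h => (not_BCs_BCl hw h).elim,
          fun h => (not_BCs_BCm hv h).elim⟩
        · simp only [Iform_smul_left, Iform_smul_right, Iform_eps, if_pos rfl]
          rcases sq_one_cases hs with rfl | rfl <;> rcases sq_one_cases ht with rfl | rfl <;>
            push_cast <;> ring
        · rcases sq_one_cases hs with rfl | rfl <;> rcases sq_one_cases ht with rfl | rfl <;>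
            match_scalars <;> push_cast <;> ring
      · refine ⟨0, ?_, fun _ => mem_BCs_iff.2 ⟨j, t, ht, by push_cast; module⟩,
          fun h => (not_BCs_BCm hw h).elim, fun h => (not_BCs_BCl hw h).elim,
          fun _ => ⟨0, by ring⟩, fun _ h => (not_BCs_BCl hw h).elim,
          fun h => (not_BCs_BCm hv h).elim⟩
        simp only [Iform_smul_left, Iform_smul_right, Iform_eps, if_neg hji]
        push_cast; ring
    · -- w middle
      obtain ⟨p, q, u, x, hpq, hu, hx, rfl⟩ := mem_BCm_iff.1 hw
      by_cases hpi : p = i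
      · subst hpi
        refine ⟨2 * u * s, ?_,
          fun h => (not_BCs_BCm h hw).elim,
          fun _ => mem_BCm_iff.2 ⟨p, q, -u, x, hpq, sq1_neg hu, hx, ?_⟩,
          fun h => (not_BCm_BCl hw h).elim,
          fun _ => ⟨u * s, by ring⟩, fun _ h => (not_BCm_BCl hw h).elim,
          fun h => (not_BCs_BCm hv h).elim⟩
        · have hqp := Ne.symm hpq
          simp only [Iform_add_left, Iform_smul_left, Iform_smul_right, Iform_eps,
            if_pos rfl, if_neg hqp]
          rcases sq_one_cases hs with rfl | rfl <;> rcases sq_one_cases hu with rfl | rfl <;>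
            push_cast <;> ring
        · rcases sq_one_cases hs with rfl | rfl <;> rcases sq_one_cases hu with rfl | rfl <;>
            match_scalars <;> push_cast <;> ring
      · by_cases hqi : q = i
        · subst hqi
          refine ⟨2 * x * s, ?_,
            fun h => (not_BCs_BCm h hw).elim,
            fun _ => mem_BCm_iff.2 ⟨p, q, u, -x, hpq, hu, sq1_neg hx, ?_⟩,
            fun h => (not_BCm_BCl hw h).elim,
            fun _ => ⟨x * s, by ring⟩, fun _ h => (not_BCm_BCl hw h).elim,
            fun h => (not_BCs_BCm hv h).elim⟩
          · simp only [Iform_add_left, Iform_smul_left, Iform_smul_right, Iform_eps,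
              if_pos rfl, if_neg hpq]
            rcases sq_one_cases hs with rfl | rfl <;> rcases sq_one_cases hx with rfl | rfl <;>
              push_cast <;> ring
          · rcases sq_one_cases hs with rfl | rfl <;> rcases sq_one_cases hx with rfl | rfl <;>
              match_scalars <;> push_cast <;> ring
        · refine ⟨0, ?_,
            fun h => (not_BCs_BCm h hw).elim,
            fun _ => mem_BCm_iff.2 ⟨p, q, u, x, hpq, hu, hx, by push_cast; module⟩,
            fun h => (not_BCm_BCl hw h).elim,
            fun _ => ⟨0, by ring⟩, fun _ h => (not_BCm_BCl hw h).elim,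
            fun h => (not_BCs_BCm hv h).elim⟩
          simp only [Iform_add_left, Iform_smul_left, Iform_smul_right, Iform_eps,
            if_neg hpi, if_neg hqi]
          push_cast; ring
    · -- w long
      obtain ⟨j, u, hu, rfl⟩ := mem_BCl_iff.1 hw
      by_cases hji : j = i
      · subst hji
        refine ⟨4 * u * s, ?_,
          fun h => (not_BCs_BCl h hw).elim, fun h => (not_BCm_BCl h hw).elim,
          fun _ => mem_BCl_iff.2 ⟨j, -u, sq1_neg hu, ?_⟩,
          fun _ => ⟨2 * u * s, by ring⟩, fun _ _ => ⟨u * s, by ring⟩,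
          fun h => (not_BCs_BCm hv h).elim⟩
        · simp only [Iform_smul_left, Iform_smul_right, Iform_eps, if_pos rfl]
          rcases sq_one_cases hs with rfl | rfl <;> rcases sq_one_cases hu with rfl | rfl <;>
            push_cast <;> ring
        · rcases sq_one_cases hs with rfl | rfl <;> rcases sq_one_cases hu with rfl | rfl <;>
            match_scalars <;> push_cast <;> ring
      · refine ⟨0, ?_,
          fun h => (not_BCs_BCl h hw).elim, fun h => (not_BCm_BCl h hw).elim,
          fun _ => mem_BCl_iff.2 ⟨j, u, hu, by push_cast; module⟩,
          fun _ => ⟨0, by ring⟩, fun _ _ => ⟨0, by ring⟩,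
          fun h => (not_BCs_BCm hv h).elim⟩
        simp only [Iform_smul_left, Iform_smul_right, Iform_eps, if_neg hji]
        push_cast; ring
  · -- v middle
    obtain ⟨i, j, s, t, hij, hs, ht, rfl⟩ := mem_BCm_iff.1 hv
    have hji := Ne.symm hij
    rcases hw with hw | hw | hw
    · -- w short
      obtain ⟨k, u, hu, rfl⟩ := mem_BCs_iff.1 hw
      by_cases hki : k = i
      · subst hki
        refine ⟨u * s, ?_,
          fun _ => mem_BCs_iff.2 ⟨j, -(u * s * t), sq1_neg (sq1_mul (sq1_mul hu hs) ht), ?_⟩,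
          fun h => (not_BCs_BCm hw h).elim, fun h => (not_BCs_BCl hw h).elim,
          fun h => (not_BCs_BCm h hv).elim, fun _ h => (not_BCs_BCl hw h).elim,
          fun _ h => (not_BCs_BCl hw h).elim⟩
        · simp only [Iform_add_right, Iform_smul_left, Iform_smul_right, Iform_add_left,
            Iform_eps, if_pos rfl, if_neg hij, if_neg hji]
          rcases sq_one_cases hs with rfl | rfl <;> rcases sq_one_cases ht with rfl | rfl <;>
            rcases sq_one_cases hu with rfl | rfl <;> push_cast <;> ring
        · rcases sq_one_cases hs with rfl | rfl <;> rcases sq_one_cases ht with rfl | rfl <;>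
            rcases sq_one_cases hu with rfl | rfl <;> match_scalars <;> push_cast <;> ring
      · by_cases hkj : k = j
        · subst hkj
          refine ⟨u * t, ?_,
            fun _ => mem_BCs_iff.2 ⟨i, -(u * t * s), sq1_neg (sq1_mul (sq1_mul hu ht) hs), ?_⟩,
            fun h => (not_BCs_BCm hw h).elim, fun h => (not_BCs_BCl hw h).elim,
            fun h => (not_BCs_BCm h hv).elim, fun _ h => (not_BCs_BCl hw h).elim,
            fun _ h => (not_BCs_BCl hw h).elim⟩
          · simp only [Iform_add_right, Iform_smul_left, Iform_smul_right, Iform_add_left,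
              Iform_eps, if_pos rfl, if_neg hij, if_neg hji]
            rcases sq_one_cases hs with rfl | rfl <;> rcases sq_one_cases ht with rfl | rfl <;>
              rcases sq_one_cases hu with rfl | rfl <;> push_cast <;> ring
          · rcases sq_one_cases hs with rfl | rfl <;> rcases sq_one_cases ht with rfl | rfl <;>
              rcases sq_one_cases hu with rfl | rfl <;> match_scalars <;> push_cast <;> ring
        · refine ⟨0, ?_,
            fun _ => mem_BCs_iff.2 ⟨k, u, hu, by push_cast; module⟩,
            fun h => (not_BCs_BCm hw h).elim, fun h => (not_BCs_BCl hw h).elim,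
            fun h => (not_BCs_BCm h hv).elim, fun _ h => (not_BCs_BCl hw h).elim,
            fun _ h => (not_BCs_BCl hw h).elim⟩
          simp only [Iform_add_right, Iform_smul_left, Iform_smul_right,
            Iform_eps, if_neg hki, if_neg hkj]
          push_cast; ring
    · -- w middle
      obtain ⟨p, q, u, x, hpq, hu, hx, rfl⟩ := mem_BCm_iff.1 hw
      have hqp := Ne.symm hpq
      by_cases hpi : p = i
      · subst hpi
        by_cases hqj : q = j
        · subst hqj
          refine ⟨u * s + x * t, ?_,
            fun h => (not_BCs_BCm h hw).elim,
            fun _ => mem_BCm_iff.2 ⟨p, q, -(x * t * s), -(u * s * t), hpq,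
              sq1_neg (sq1_mul (sq1_mul hx ht) hs), sq1_neg (sq1_mul (sq1_mul hu hs) ht), ?_⟩,
            fun h => (not_BCm_BCl hw h).elim,
            fun h => (not_BCs_BCm h hv).elim, fun _ h => (not_BCm_BCl hw h).elim,
            fun _ h => (not_BCm_BCl hw h).elim⟩
          · simp only [Iform_add_right, Iform_smul_left, Iform_smul_right, Iform_add_left,
              Iform_eps, if_pos rfl, if_neg hij, if_neg hji]
            rcases sq_one_cases hs with rfl | rfl <;> rcases sq_one_cases ht with rfl | rfl <;>
              rcases sq_one_cases hu with rfl | rfl <;> rcases sq_one_cases hx with rfl | rfl <;>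
              push_cast <;> ring
          · rcases sq_one_cases hs with rfl | rfl <;> rcases sq_one_cases ht with rfl | rfl <;>
              rcases sq_one_cases hu with rfl | rfl <;> rcases sq_one_cases hx with rfl | rfl <;>
              match_scalars <;> push_cast <;> ring
        · -- p = i, q ∉ {i, j}
          have hqi : ¬ q = p := hqp
          refine ⟨u * s, ?_,
            fun h => (not_BCs_BCm h hw).elim,
            fun _ => mem_BCm_iff.2 ⟨j, q, -(u * s * t), x, fun h => hqj h.symm,
              sq1_neg (sq1_mul (sq1_mul hu hs) ht), hx, ?_⟩,
            fun h => (not_BCm_BCl hw h).elim,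
            fun h => (not_BCs_BCm h hv).elim, fun _ h => (not_BCm_BCl hw h).elim,
            fun _ h => (not_BCm_BCl hw h).elim⟩
          · simp only [Iform_add_right, Iform_smul_left, Iform_smul_right, Iform_add_left,
              Iform_eps, if_pos rfl, if_neg hij, if_neg hji, if_neg hqi, if_neg hqj]
            rcases sq_one_cases hs with rfl | rfl <;> rcases sq_one_cases ht with rfl | rfl <;>
              rcases sq_one_cases hu with rfl | rfl <;> push_cast <;> ring
          · rcases sq_one_cases hs with rfl | rfl <;> rcases sq_one_cases ht with rfl | rfl <;>
              rcases sq_one_cases hu with rfl | rfl <;> match_scalars <;> push_cast <;> ring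
      · by_cases hpj : p = j
        · subst hpj
          by_cases hqi : q = i
          · subst hqi
            refine ⟨u * t + x * s, ?_,
              fun h => (not_BCs_BCm h hw).elim,
              fun _ => mem_BCm_iff.2 ⟨q, p, -(u * t * s), -(x * s * t), hqp,
                sq1_neg (sq1_mul (sq1_mul hu ht) hs), sq1_neg (sq1_mul (sq1_mul hx hs) ht), ?_⟩,
              fun h => (not_BCm_BCl hw h).elim,
              fun h => (not_BCs_BCm h hv).elim, fun _ h => (not_BCm_BCl hw h).elim,
              fun _ h => (not_BCm_BCl hw h).elim⟩
            · simp only [Iform_add_right, Iform_smul_left, Iform_smul_right, Iform_add_left,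
                Iform_eps, if_pos rfl, if_neg hij, if_neg hji]
              rcases sq_one_cases hs with rfl | rfl <;> rcases sq_one_cases ht with rfl | rfl <;>
                rcases sq_one_cases hu with rfl | rfl <;> rcases sq_one_cases hx with rfl | rfl <;>
                push_cast <;> ring
            · rcases sq_one_cases hs with rfl | rfl <;> rcases sq_one_cases ht with rfl | rfl <;>
                rcases sq_one_cases hu with rfl | rfl <;> rcases sq_one_cases hx with rfl | rfl <;>
                match_scalars <;> push_cast <;> ring
          · -- p = j, q ∉ {i, j}
            have hqj : ¬ q = p := hqp
            refine ⟨u * t, ?_,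
              fun h => (not_BCs_BCm h hw).elim,
              fun _ => mem_BCm_iff.2 ⟨i, q, -(u * t * s), x, fun h => hqi h.symm,
                sq1_neg (sq1_mul (sq1_mul hu ht) hs), hx, ?_⟩,
              fun h => (not_BCm_BCl hw h).elim,
              fun h => (not_BCs_BCm h hv).elim, fun _ h => (not_BCm_BCl hw h).elim,
              fun _ h => (not_BCm_BCl hw h).elim⟩
            · simp only [Iform_add_right, Iform_smul_left, Iform_smul_right, Iform_add_left,
                Iform_eps, if_pos rfl, if_neg hij, if_neg hji, if_neg hqi, if_neg hqj]
              rcases sq_one_cases hs with rfl | rfl <;> rcases sq_one_cases ht with rfl | rfl <;>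
                rcases sq_one_cases hu with rfl | rfl <;> push_cast <;> ring
            · rcases sq_one_cases hs with rfl | rfl <;> rcases sq_one_cases ht with rfl | rfl <;>
                rcases sq_one_cases hu with rfl | rfl <;> match_scalars <;> push_cast <;> ring
        · by_cases hqi : q = i
          · subst hqi
            refine ⟨x * s, ?_,
              fun h => (not_BCs_BCm h hw).elim,
              fun _ => mem_BCm_iff.2 ⟨p, j, u, -(x * s * t), hpj,
                hu, sq1_neg (sq1_mul (sq1_mul hx hs) ht), ?_⟩,
              fun h => (not_BCm_BCl hw h).elim,
              fun h => (not_BCs_BCm h hv).elim, fun _ h => (not_BCm_BCl hw h).elim,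
              fun _ h => (not_BCm_BCl hw h).elim⟩
            · simp only [Iform_add_right, Iform_smul_left, Iform_smul_right, Iform_add_left,
                Iform_eps, if_pos rfl, if_neg hij, if_neg hji, if_neg hpi, if_neg hpj]
              rcases sq_one_cases hs with rfl | rfl <;> rcases sq_one_cases ht with rfl | rfl <;>
                rcases sq_one_cases hx with rfl | rfl <;> push_cast <;> ring
            · rcases sq_one_cases hs with rfl | rfl <;> rcases sq_one_cases ht with rfl | rfl <;>
                rcases sq_one_cases hx with rfl | rfl <;> match_scalars <;> push_cast <;> ring
          · by_cases hqj : q = j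
            · subst hqj
              refine ⟨x * t, ?_,
                fun h => (not_BCs_BCm h hw).elim,
                fun _ => mem_BCm_iff.2 ⟨p, i, u, -(x * t * s), hpi,
                  hu, sq1_neg (sq1_mul (sq1_mul hx ht) hs), ?_⟩,
                fun h => (not_BCm_BCl hw h).elim,
                fun h => (not_BCs_BCm h hv).elim, fun _ h => (not_BCm_BCl hw h).elim,
                fun _ h => (not_BCm_BCl hw h).elim⟩
              · simp only [Iform_add_right, Iform_smul_left, Iform_smul_right, Iform_add_left,
                  Iform_eps, if_pos rfl, if_neg hij, if_neg hji, if_neg hpi, if_neg hpj]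
                rcases sq_one_cases hs with rfl | rfl <;> rcases sq_one_cases ht with rfl | rfl <;>
                  rcases sq_one_cases hx with rfl | rfl <;> push_cast <;> ring
              · rcases sq_one_cases hs with rfl | rfl <;> rcases sq_one_cases ht with rfl | rfl <;>
                  rcases sq_one_cases hx with rfl | rfl <;> match_scalars <;> push_cast <;> ring
            · refine ⟨0, ?_,
                fun h => (not_BCs_BCm h hw).elim,
                fun _ => mem_BCm_iff.2 ⟨p, q, u, x, hpq, hu, hx, by push_cast; module⟩,
                fun h => (not_BCm_BCl hw h).elim,
                fun h => (not_BCs_BCm h hv).elim, fun _ h => (not_BCm_BCl hw h).elim,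
                fun _ h => (not_BCm_BCl hw h).elim⟩
              simp only [Iform_add_right, Iform_smul_left, Iform_smul_right, Iform_add_left,
                Iform_eps, if_neg hpi, if_neg hpj, if_neg hqi, if_neg hqj]
              push_cast; ring
    · -- w long
      obtain ⟨k, u, hu, rfl⟩ := mem_BCl_iff.1 hw
      by_cases hki : k = i
      · subst hki
        refine ⟨2 * u * s, ?_,
          fun h => (not_BCs_BCl h hw).elim, fun h => (not_BCm_BCl h hw).elim,
          fun _ => mem_BCl_iff.2 ⟨j, -(u * s * t), sq1_neg (sq1_mul (sq1_mul hu hs) ht), ?_⟩,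
          fun h => (not_BCs_BCm h hv).elim, fun h => (not_BCs_BCm h hv).elim,
          fun _ _ => ⟨u * s, by ring⟩⟩
        · simp only [Iform_add_right, Iform_smul_left, Iform_smul_right, Iform_add_left,
            Iform_eps, if_pos rfl, if_neg hij, if_neg hji]
          rcases sq_one_cases hs with rfl | rfl <;> rcases sq_one_cases ht with rfl | rfl <;>
            rcases sq_one_cases hu with rfl | rfl <;> push_cast <;> ring
        · rcases sq_one_cases hs with rfl | rfl <;> rcases sq_one_cases ht with rfl | rfl <;>
            rcases sq_one_cases hu with rfl | rfl <;> match_scalars <;> push_cast <;> ring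
      · by_cases hkj : k = j
        · subst hkj
          refine ⟨2 * u * t, ?_,
            fun h => (not_BCs_BCl h hw).elim, fun h => (not_BCm_BCl h hw).elim,
            fun _ => mem_BCl_iff.2 ⟨i, -(u * t * s), sq1_neg (sq1_mul (sq1_mul hu ht) hs), ?_⟩,
            fun h => (not_BCs_BCm h hv).elim, fun h => (not_BCs_BCm h hv).elim,
            fun _ _ => ⟨u * t, by ring⟩⟩
          · simp only [Iform_add_right, Iform_smul_left, Iform_smul_right, Iform_add_left,
              Iform_eps, if_pos rfl, if_neg hij, if_neg hji]
            rcases sq_one_cases hs with rfl | rfl <;> rcases sq_one_cases ht with rfl | rfl <;>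
              rcases sq_one_cases hu with rfl | rfl <;> push_cast <;> ring
          · rcases sq_one_cases hs with rfl | rfl <;> rcases sq_one_cases ht with rfl | rfl <;>
              rcases sq_one_cases hu with rfl | rfl <;> match_scalars <;> push_cast <;> ring
        · refine ⟨0, ?_,
            fun h => (not_BCs_BCl h hw).elim, fun h => (not_BCm_BCl h hw).elim,
            fun _ => mem_BCl_iff.2 ⟨k, u, hu, by push_cast; module⟩,
            fun h => (not_BCs_BCm h hv).elim, fun h => (not_BCs_BCm h hv).elim,
            fun _ _ => ⟨0, by ring⟩⟩
          simp only [Iform_add_right, Iform_smul_left, Iform_smul_right,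
            Iform_eps, if_neg hki, if_neg hkj]
          push_cast; ring
  · -- v long
    obtain ⟨i, s, hs, rfl⟩ := mem_BCl_iff.1 hv
    rcases hw with hw | hw | hw
    · -- w short
      obtain ⟨j, u, hu, rfl⟩ := mem_BCs_iff.1 hw
      by_cases hji : j = i
      · subst hji
        refine ⟨u * s, ?_,
          fun _ => mem_BCs_iff.2 ⟨j, -u, sq1_neg hu, ?_⟩,
          fun h => (not_BCs_BCm hw h).elim, fun h => (not_BCs_BCl hw h).elim,
          fun h => (not_BCs_BCl h hv).elim, fun _ h => (not_BCs_BCl hw h).elim,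
          fun h => (not_BCm_BCl h hv).elim⟩
        · simp only [Iform_smul_left, Iform_smul_right, Iform_eps, if_pos rfl]
          rcases sq_one_cases hs with rfl | rfl <;> rcases sq_one_cases hu with rfl | rfl <;>
            push_cast <;> ring
        · rcases sq_one_cases hs with rfl | rfl <;> rcases sq_one_cases hu with rfl | rfl <;>
            match_scalars <;> push_cast <;> ring
      · refine ⟨0, ?_,
          fun _ => mem_BCs_iff.2 ⟨j, u, hu, by push_cast; module⟩,
          fun h => (not_BCs_BCm hw h).elim, fun h => (not_BCs_BCl hw h).elim,
          fun h => (not_BCs_BCl h hv).elim, fun _ h => (not_BCs_BCl hw h).elim,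
          fun h => (not_BCm_BCl h hv).elim⟩
        simp only [Iform_smul_left, Iform_smul_right, Iform_eps, if_neg hji]
        push_cast; ring
    · -- w middle
      obtain ⟨p, q, u, x, hpq, hu, hx, rfl⟩ := mem_BCm_iff.1 hw
      have hqp := Ne.symm hpq
      by_cases hpi : p = i
      · subst hpi
        have hqi : ¬ q = p := hqp
        refine ⟨u * s, ?_,
          fun h => (not_BCs_BCm h hw).elim,
          fun _ => mem_BCm_iff.2 ⟨p, q, -u, x, hpq, sq1_neg hu, hx, ?_⟩,
          fun h => (not_BCm_BCl hw h).elim,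
          fun h => (not_BCs_BCl h hv).elim, fun _ h => (not_BCm_BCl hw h).elim,
          fun _ h => (not_BCm_BCl hw h).elim⟩
        · simp only [Iform_add_left, Iform_smul_left, Iform_smul_right, Iform_eps,
            if_pos rfl, if_neg hqi]
          rcases sq_one_cases hs with rfl | rfl <;> rcases sq_one_cases hu with rfl | rfl <;>
            push_cast <;> ring
        · rcases sq_one_cases hs with rfl | rfl <;> rcases sq_one_cases hu with rfl | rfl <;>
            match_scalars <;> push_cast <;> ring
      · by_cases hqi : q = i
        · subst hqi
          refine ⟨x * s, ?_,
            fun h => (not_BCs_BCm h hw).elim,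
            fun _ => mem_BCm_iff.2 ⟨p, q, u, -x, hpq, hu, sq1_neg hx, ?_⟩,
            fun h => (not_BCm_BCl hw h).elim,
            fun h => (not_BCs_BCl h hv).elim, fun _ h => (not_BCm_BCl hw h).elim,
            fun _ h => (not_BCm_BCl hw h).elim⟩
          · simp only [Iform_add_left, Iform_smul_left, Iform_smul_right, Iform_eps,
              if_pos rfl, if_neg hpq]
            rcases sq_one_cases hs with rfl | rfl <;> rcases sq_one_cases hx with rfl | rfl <;>
              push_cast <;> ring
          · rcases sq_one_cases hs with rfl | rfl <;> rcases sq_one_cases hx with rfl | rfl <;>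
              match_scalars <;> push_cast <;> ring
        · refine ⟨0, ?_,
            fun h => (not_BCs_BCm h hw).elim,
            fun _ => mem_BCm_iff.2 ⟨p, q, u, x, hpq, hu, hx, by push_cast; module⟩,
            fun h => (not_BCm_BCl hw h).elim,
            fun h => (not_BCs_BCl h hv).elim, fun _ h => (not_BCm_BCl hw h).elim,
            fun _ h => (not_BCm_BCl hw h).elim⟩
          simp only [Iform_add_left, Iform_smul_left, Iform_smul_right, Iform_eps,
            if_neg hpi, if_neg hqi]
          push_cast; ring
    · -- w long
      obtain ⟨j, u, hu, rfl⟩ := mem_BCl_iff.1 hw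
      by_cases hji : j = i
      · subst hji
        refine ⟨2 * u * s, ?_,
          fun h => (not_BCs_BCl h hw).elim, fun h => (not_BCm_BCl h hw).elim,
          fun _ => mem_BCl_iff.2 ⟨j, -u, sq1_neg hu, ?_⟩,
          fun h => (not_BCs_BCl h hv).elim, fun h => (not_BCs_BCl h hv).elim,
          fun h => (not_BCm_BCl h hv).elim⟩
        · simp only [Iform_smul_left, Iform_smul_right, Iform_eps, if_pos rfl]
          rcases sq_one_cases hs with rfl | rfl <;> rcases sq_one_cases hu with rfl | rfl <;>
            push_cast <;> ring
        · rcases sq_one_cases hs with rfl | rfl <;> rcases sq_one_cases hu with rfl | rfl <;>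
            match_scalars <;> push_cast <;> ring
      · refine ⟨0, ?_,
          fun h => (not_BCs_BCl h hw).elim, fun h => (not_BCm_BCl h hw).elim,
          fun _ => mem_BCl_iff.2 ⟨j, u, hu, by push_cast; module⟩,
          fun h => (not_BCs_BCl h hv).elim, fun h => (not_BCs_BCl h hv).elim,
          fun h => (not_BCm_BCl h hv).elim⟩
        simp only [Iform_smul_left, Iform_smul_right, Iform_eps, if_neg hji]
        push_cast; ring

end NRC
namespace NRC
variable {l : ℕ}

/-- General pattern covering all the systems in question. -/
def Rgen (l : ℕ) (im tm il tl : ℤ) : Set (V l) :=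
  {x | ∃ (v : V l) (m n : ℤ),
    x = v + (m : ℝ) • av l + (n : ℝ) • bv l ∧
    (v ∈ BCs l ∨ (v ∈ BCm l ∧ im ∣ m ∧ tm ∣ n) ∨ (v ∈ BCl l ∧ il ∣ m ∧ tl ∣ n))}

def Affgen (l : ℕ) (tm tl : ℤ) : Set (V l) :=
  {x | ∃ (v : V l) (n : ℤ),
    x = v + (n : ℝ) • bv l ∧
    (v ∈ BCs l ∨ (v ∈ BCm l ∧ tm ∣ n) ∨ (v ∈ BCl l ∧ tl ∣ n))}

lemma mem_add_Zb_Za (C : Set (V l)) (k j : ℤ) (x : V l) :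
    x ∈ C + Zb l k + Za l j ↔
      ∃ v ∈ C, ∃ m n : ℤ, j ∣ m ∧ k ∣ n ∧ x = v + (m : ℝ) • av l + (n : ℝ) • bv l := by
  constructor
  · rintro ⟨y, ⟨v, hv, z, ⟨n', rfl⟩, rfl⟩, za, ⟨m', rfl⟩, rfl⟩
    exact ⟨v, hv, j * m', k * n', ⟨m', rfl⟩, ⟨n', rfl⟩, by push_cast; abel⟩
  · rintro ⟨v, hv, m, n, ⟨m', rfl⟩, ⟨n', rfl⟩, rfl⟩
    exact ⟨v + ((k * n' : ℤ) : ℝ) • bv l, ⟨v, hv, _, ⟨n', rfl⟩, rfl⟩,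
      ((j * m' : ℤ) : ℝ) • av l, ⟨m', rfl⟩, by push_cast; abel⟩

lemma mem_add_Zb (C : Set (V l)) (k : ℤ) (x : V l) :
    x ∈ C + Zb l k ↔ ∃ v ∈ C, ∃ n : ℤ, k ∣ n ∧ x = v + (n : ℝ) • bv l := by
  constructor
  · rintro ⟨v, hv, z, ⟨n', rfl⟩, rfl⟩
    exact ⟨v, hv, k * n', ⟨n', rfl⟩, rfl⟩
  · rintro ⟨v, hv, n, ⟨n', rfl⟩, rfl⟩
    exact ⟨v, hv, _, ⟨n', rfl⟩, rfl⟩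

lemma union_eq_Rgen (im tm il tl : ℤ) :
    (BCs l + Zb l 1 + Za l 1) ∪ (BCm l + Zb l tm + Za l im) ∪ (BCl l + Zb l tl + Za l il)
      = Rgen l im tm il tl := by
  ext x
  simp only [Set.mem_union, mem_add_Zb_Za, Rgen, Set.mem_setOf_eq]
  constructor
  · rintro ((⟨v, hv, m, n, _, _, rfl⟩ | ⟨v, hv, m, n, h1, h2, rfl⟩) | ⟨v, hv, m, n, h1, h2, rfl⟩)
    · exact ⟨v, m, n, rfl, Or.inl hv⟩
    · exact ⟨v, m, n, rfl, Or.inr (Or.inl ⟨hv, h1, h2⟩)⟩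
    · exact ⟨v, m, n, rfl, Or.inr (Or.inr ⟨hv, h1, h2⟩)⟩
  · rintro ⟨v, m, n, rfl, (hv | ⟨hv, h1, h2⟩ | ⟨hv, h1, h2⟩)⟩
    · exact Or.inl (Or.inl ⟨v, hv, m, n, one_dvd _, one_dvd _, rfl⟩)
    · exact Or.inl (Or.inr ⟨v, hv, m, n, h1, h2, rfl⟩)
    · exact Or.inr ⟨v, hv, m, n, h1, h2, rfl⟩

lemma Aff_eq (X : AffType) : Aff l X = Affgen l (tfm X) (tfl X) := by
  ext x
  simp only [Aff, AffS, AffM, AffL, Set.mem_union, mem_add_Zb, Affgen, Set.mem_setOf_eq]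
  constructor
  · rintro ((⟨v, hv, n, _, rfl⟩ | ⟨v, hv, n, h, rfl⟩) | ⟨v, hv, n, h, rfl⟩)
    · exact ⟨v, n, rfl, Or.inl hv⟩
    · exact ⟨v, n, rfl, Or.inr (Or.inl ⟨hv, h⟩)⟩
    · exact ⟨v, n, rfl, Or.inr (Or.inr ⟨hv, h⟩)⟩
  · rintro ⟨v, n, rfl, (hv | ⟨hv, h⟩ | ⟨hv, h⟩)⟩
    · exact Or.inl (Or.inl ⟨v, hv, n, one_dvd _, rfl⟩)
    · exact Or.inl (Or.inr ⟨v, hv, n, h, rfl⟩)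
    · exact Or.inr ⟨v, hv, n, h, rfl⟩

lemma E1_eq (X : AffType) : E1 l X = Rgen l 1 (tfm X) 1 (tfl X) := by
  rw [E1, Aff, Set.union_add, Set.union_add, ← union_eq_Rgen]
  rfl

lemma E2_eq (X : AffType) (i : ℤ) : E2 l X i = Rgen l i (tfm X) 2 (tfl X) := by
  rw [E2, ← union_eq_Rgen]
  rfl

lemma E4_eq (X : AffType) : E4 l X = Rgen l 2 (tfm X) 4 (tfl X) := by
  rw [E4, ← union_eq_Rgen]
  rfl

end NRC
namespace NRC
variable {l : ℕ}

def IsInt (x : V l) : Prop := ∀ k, ∃ z : ℤ, x k = z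

lemma isInt_single (j : Fin (l + 2)) : IsInt (Pi.single j (1 : ℝ)) := by
  intro k
  by_cases h : k = j
  · subst h; exact ⟨1, by simp⟩
  · exact ⟨0, by simp [Pi.single_apply, h, Ne.symm h]⟩

lemma isInt_εv (i : Fin l) : IsInt (εv l i) := isInt_single _
lemma isInt_av : IsInt (av l) := isInt_single _
lemma isInt_bv : IsInt (bv l) := isInt_single _

lemma isInt_add {x y : V l} (hx : IsInt x) (hy : IsInt y) : IsInt (x + y) := by
  intro k
  obtain ⟨z1, h1⟩ := hx k
  obtain ⟨z2, h2⟩ := hy k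
  exact ⟨z1 + z2, by push_cast; simp [h1, h2]⟩

lemma isInt_zsmul {x : V l} (z : ℤ) (hx : IsInt x) : IsInt ((z : ℝ) • x) := by
  intro k
  obtain ⟨z1, h1⟩ := hx k
  exact ⟨z * z1, by push_cast; simp [h1]⟩

lemma isInt_BC {v : V l} (hv : v ∈ BCs l ∨ v ∈ BCm l ∨ v ∈ BCl l) : IsInt v := by
  rcases hv with hv | hv | hv
  · obtain ⟨i, s, _, rfl⟩ := mem_BCs_iff.1 hv
    exact isInt_zsmul s (isInt_εv i)
  · obtain ⟨i, j, s, t, _, _, _, rfl⟩ := mem_BCm_iff.1 hv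
    exact isInt_add (isInt_zsmul s (isInt_εv i)) (isInt_zsmul t (isInt_εv j))
  · obtain ⟨i, s, _, rfl⟩ := mem_BCl_iff.1 hv
    exact isInt_zsmul _ (isInt_εv i)

lemma isInt_Rgen {im tm il tl : ℤ} {x : V l} (hx : x ∈ Rgen l im tm il tl) : IsInt x := by
  obtain ⟨v, m, n, rfl, hv⟩ := hx
  have hv' : v ∈ BCs l ∨ v ∈ BCm l ∨ v ∈ BCl l := by tauto
  exact isInt_add (isInt_add (isInt_BC hv') (isInt_zsmul m isInt_av)) (isInt_zsmul n isInt_bv)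

lemma eq_of_isInt_close {x y : V l} (hx : IsInt x) (hy : IsInt y) (h : ‖x - y‖ < 1) : y = x := by
  funext k
  obtain ⟨z1, h1⟩ := hx k
  obtain ⟨z2, h2⟩ := hy k
  have hk : ‖(x - y) k‖ ≤ ‖x - y‖ := norm_le_pi_norm (x - y) k
  have : |(z1 : ℝ) - z2| < 1 := by
    rw [Pi.sub_apply, h1, h2] at hk
    calc |(z1 : ℝ) - z2| = ‖(z1 : ℝ) - z2‖ := rfl
    _ < 1 := lt_of_le_of_lt hk h
  have : |z1 - z2| < 1 := by exact_mod_cast (by push_cast; convert this using 2 : |((z1 - z2 : ℤ) : ℝ)| < 1)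
  have : z1 = z2 := by
    rcases abs_lt.1 this with ⟨h1', h2'⟩; omega
  rw [h1, h2, this]

/-- key membership producers -/
lemma short_mem_Rgen {im tm il tl : ℤ} {v : V l} (hv : v ∈ BCs l) (m n : ℤ) :
    v + (m : ℝ) • av l + (n : ℝ) • bv l ∈ Rgen l im tm il tl :=
  ⟨v, m, n, rfl, Or.inl hv⟩

lemma εv_mem_BCs (i : Fin l) : εv l i ∈ BCs l :=
  mem_BCs_iff.2 ⟨i, 1, by norm_num, by norm_num⟩

lemma mem_Rgen_of_short {im tm il tl : ℤ} {v : V l} (hv : v ∈ BCs l) :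
    v ∈ Rgen l im tm il tl := by
  have := short_mem_Rgen (im := im) (tm := tm) (il := il) (tl := tl) hv 0 0
  simpa using this

lemma εv_mem_Rgen {im tm il tl : ℤ} (i : Fin l) : εv l i ∈ Rgen l im tm il tl :=
  mem_Rgen_of_short (εv_mem_BCs i)

end NRC
namespace NRC
variable {l : ℕ}

lemma Iform_shift_left (v y : V l) (m n : ℝ) :
    Iform l (v + m • av l + n • bv l) y = Iform l v y := by
  simp [Iform_add_left, Iform_smul_left, Iform_av_left, Iform_bv_left]

lemma Iform_shift_right (v y : V l) (m n : ℝ) :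
    Iform l y (v + m • av l + n • bv l) = Iform l y v := by
  rw [Iform_comm, Iform_shift_left, Iform_comm]

lemma Ivv_ne_zero {v : V l} (hv : v ∈ BCs l ∨ v ∈ BCm l ∨ v ∈ BCl l) :
    Iform l v v ≠ 0 := by
  rcases hv with hv | hv | hv
  · rw [Iform_BCs hv]; norm_num
  · rw [Iform_BCm hv]; norm_num
  · rw [Iform_BCl hv]; norm_num

lemma reflV_invol (α x : V l) (h : Iform l α α ≠ 0) : reflV l α (reflV l α x) = x := by
  unfold reflV
  rw [Iform_sub_left, Iform_smul_left]
  match_scalars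
  · ring
  · field_simp
    ring

lemma class_of_mem {im tm il tl : ℤ} {x : V l} (hx : x ∈ Rgen l im tm il tl) :
    ∃ (v : V l) (m n : ℤ), x = v + (m : ℝ) • av l + (n : ℝ) • bv l ∧
      (v ∈ BCs l ∨ (v ∈ BCm l ∧ im ∣ m ∧ tm ∣ n) ∨ (v ∈ BCl l ∧ il ∣ m ∧ tl ∣ n)) := hx

lemma reflV_mem_Rgen {im tm il tl : ℤ}
    (him : im ∣ 2) (hil : il ∣ 4) (himl : il ∣ 2 * im) (himil : im ∣ il)
    (htm : tm ∣ 2) (htl : tl ∣ 4) (html : tl ∣ 2 * tm) (htmtl : tm ∣ tl)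
    {α β : V l} (hα : α ∈ Rgen l im tm il tl) (hβ : β ∈ Rgen l im tm il tl) :
    reflV l α β ∈ Rgen l im tm il tl := by
  obtain ⟨v, m, n, rfl, hv⟩ := hα
  obtain ⟨w, m', n', rfl, hw⟩ := hβ
  have hv' : v ∈ BCs l ∨ v ∈ BCm l ∨ v ∈ BCl l := by tauto
  have hw' : w ∈ BCs l ∨ w ∈ BCm l ∨ w ∈ BCl l := by tauto
  obtain ⟨c, hc, hS, hM, hL, d1, d2, d3⟩ := BC_key v w hv' hw'
  have hIvv : Iform l v v ≠ 0 := Ivv_ne_zero hv'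
  have hcoef : 2 * Iform l (w + (m' : ℝ) • av l + (n' : ℝ) • bv l)
      (v + (m : ℝ) • av l + (n : ℝ) • bv l) /
      Iform l (v + (m : ℝ) • av l + (n : ℝ) • bv l) (v + (m : ℝ) • av l + (n : ℝ) • bv l)
      = (c : ℝ) := by
    simp only [Iform_shift_left, Iform_shift_right]
    rw [hc, mul_div_assoc, div_self hIvv, mul_one]
  have hrefl : reflV l (v + (m : ℝ) • av l + (n : ℝ) • bv l)
      (w + (m' : ℝ) • av l + (n' : ℝ) • bv l)
      = (w - (c : ℝ) • v) + ((m' - c * m : ℤ) : ℝ) • av l + ((n' - c * n : ℤ) : ℝ) • bv l := by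
    unfold reflV
    rw [hcoef]
    push_cast
    module
  rw [hrefl]
  rcases hw with hws | ⟨hwm, h1, h2⟩ | ⟨hwl, h1, h2⟩
  · exact ⟨w - (c : ℝ) • v, _, _, rfl, Or.inl (hS hws)⟩
  · refine ⟨w - (c : ℝ) • v, _, _, rfl, Or.inr (Or.inl ⟨hM hwm, dvd_sub h1 ?_, dvd_sub h2 ?_⟩)⟩
    · rcases hv with hvs | ⟨_, hm, _⟩ | ⟨_, hm, _⟩
      · exact ((him.trans (d1 hvs)).mul_right m)
      · exact hm.mul_left c
      · exact (himil.trans hm).mul_left c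
    · rcases hv with hvs | ⟨_, _, hn⟩ | ⟨_, _, hn⟩
      · exact ((htm.trans (d1 hvs)).mul_right n)
      · exact hn.mul_left c
      · exact (htmtl.trans hn).mul_left c
  · refine ⟨w - (c : ℝ) • v, _, _, rfl, Or.inr (Or.inr ⟨hL hwl, dvd_sub h1 ?_, dvd_sub h2 ?_⟩)⟩
    · rcases hv with hvs | ⟨hvm, hm, _⟩ | ⟨_, hm, _⟩
      · exact ((hil.trans (d2 hvs hwl)).mul_right m)
      · obtain ⟨c2, rfl⟩ := d3 hvm hwl
        obtain ⟨m2, rfl⟩ := hm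
        exact himl.trans ⟨c2 * m2, by ring⟩
      · exact hm.mul_left c
    · rcases hv with hvs | ⟨hvm, _, hn⟩ | ⟨_, _, hn⟩
      · exact ((htl.trans (d2 hvs hwl)).mul_right n)
      · obtain ⟨c2, rfl⟩ := d3 hvm hwl
        obtain ⟨n2, rfl⟩ := hn
        exact html.trans ⟨c2 * n2, by ring⟩
      · exact hn.mul_left c

lemma Iform_ne_zero_of_mem {im tm il tl : ℤ} {x : V l} (hx : x ∈ Rgen l im tm il tl) :
    Iform l x x ≠ 0 := by
  obtain ⟨v, m, n, rfl, hv⟩ := hx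
  simp only [Iform_shift_left, Iform_shift_right]
  exact Ivv_ne_zero (by tauto)

lemma nonzero_coord {im tm il tl : ℤ} {x : V l} (hx : x ∈ Rgen l im tm il tl) :
    ∃ i : Fin l, Iform l x (εv l i) ≠ 0 := by
  obtain ⟨v, m, n, rfl, hv⟩ := hx
  have hv' : v ∈ BCs l ∨ v ∈ BCm l ∨ v ∈ BCl l := by tauto
  have cast_ne : ∀ s : ℤ, s * s = 1 → (s : ℝ) ≠ 0 := by
    intro s hs h0
    rw [Int.cast_eq_zero] at h0
    subst h0
    simp at hs
  rcases hv' with hv' | hv' | hv'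
  · obtain ⟨i, s, hs, rfl⟩ := mem_BCs_iff.1 hv'
    refine ⟨i, ?_⟩
    rw [Iform_shift_left, Iform_smul_left, Iform_eps, if_pos rfl, mul_one]
    exact cast_ne s hs
  · obtain ⟨i, j, s, t, hij, hs, ht, rfl⟩ := mem_BCm_iff.1 hv'
    refine ⟨i, ?_⟩
    rw [Iform_shift_left, Iform_add_left, Iform_smul_left, Iform_smul_left,
      Iform_eps, Iform_eps, if_pos rfl, if_neg (Ne.symm hij)]
    simpa using cast_ne s hs
  · obtain ⟨i, s, hs, rfl⟩ := mem_BCl_iff.1 hv'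
    refine ⟨i, ?_⟩
    rw [Iform_shift_left, Iform_smul_left, Iform_eps, if_pos rfl, mul_one]
    intro h0
    have : ((2 * s : ℤ) : ℝ) = 0 := h0
    rw [Int.cast_eq_zero] at this
    rcases sq_one_cases hs with rfl | rfl <;> omega

lemma pair_mem_Rgen {im tm il tl : ℤ} {i j : Fin l} (hij : i ≠ j) :
    εv l i + εv l j ∈ Rgen l im tm il tl := by
  refine ⟨εv l i + εv l j, 0, 0, by push_cast; module,
    Or.inr (Or.inl ⟨mem_BCm_iff.2 ⟨i, j, 1, 1, hij, by norm_num, by norm_num, by push_cast; module⟩,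
      dvd_zero _, dvd_zero _⟩)⟩

end NRC
namespace NRC
variable {l : ℕ}

lemma av_ne_zero : av l ≠ 0 := by
  intro h
  have := congrFun h (Fin.natAdd l (0 : Fin 2))
  rw [av, Pi.single_eq_same] at this
  simp at this

lemma Rgen_spans (hl : 1 ≤ l) (im tm il tl : ℤ) :
    Submodule.span ℝ (Rgen l im tm il tl) = ⊤ := by
  set R := Rgen l im tm il tl
  have i0 : Fin l := ⟨0, hl⟩
  have hsingle : ∀ k : Fin (l + 2), Pi.single k (1 : ℝ) ∈ Submodule.span ℝ R := by
    intro k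
    induction k using Fin.addCases with
    | left i => exact Submodule.subset_span (εv_mem_Rgen i)
    | right j =>
      fin_cases j
      · have h1 : εv l i0 + ((1 : ℤ) : ℝ) • av l + ((0 : ℤ) : ℝ) • bv l ∈ R :=
          short_mem_Rgen (εv_mem_BCs i0) 1 0
        have h2 : εv l i0 ∈ R := εv_mem_Rgen i0
        have : av l = (εv l i0 + ((1 : ℤ) : ℝ) • av l + ((0 : ℤ) : ℝ) • bv l) - εv l i0 := by
          push_cast; module
        show Pi.single (Fin.natAdd l (0 : Fin 2)) (1 : ℝ) ∈ Submodule.span ℝ R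
        show av l ∈ Submodule.span ℝ R
        rw [this]
        exact Submodule.sub_mem _ (Submodule.subset_span h1) (Submodule.subset_span h2)
      · have h1 : εv l i0 + ((0 : ℤ) : ℝ) • av l + ((1 : ℤ) : ℝ) • bv l ∈ R :=
          short_mem_Rgen (εv_mem_BCs i0) 0 1
        have h2 : εv l i0 ∈ R := εv_mem_Rgen i0
        have : bv l = (εv l i0 + ((0 : ℤ) : ℝ) • av l + ((1 : ℤ) : ℝ) • bv l) - εv l i0 := by
          push_cast; module
        show bv l ∈ Submodule.span ℝ R
        rw [this]
        exact Submodule.sub_mem _ (Submodule.subset_span h1) (Submodule.subset_span h2)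
  rw [eq_top_iff]
  intro x _
  have hx : x = ∑ k, (x k) • (Pi.single k (1 : ℝ) : V l) := by
    conv_lhs => rw [← Finset.univ_sum_single x]
    congr 1
    funext k
    rw [← Pi.single_smul, smul_eq_mul, mul_one]
  rw [hx]
  exact Submodule.sum_mem _ fun k _ => Submodule.smul_mem _ _ (hsingle k)

theorem Rgen_main (hl : 1 ≤ l) (im tm il tl : ℤ)
    (him : im ∣ 2) (hil : il ∣ 4) (himl : il ∣ 2 * im) (himil : im ∣ il)
    (htm : tm ∣ 2) (htl : tl ∣ 4) (html : tl ∣ 2 * tm) (htmtl : tm ∣ tl) :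
    IsERS l (Rgen l im tm il tl) ∧
    IsNonReducedRS l (Rgen l im tm il tl) ∧
    IsMarking l (Rgen l im tm il tl) (Ga l) ∧
    (Ga l).mkQ '' (Rgen l im tm il tl) = (Ga l).mkQ '' (Affgen l tm tl) := by
  set R := Rgen l im tm il tl with hRdef
  have i0 : Fin l := ⟨0, hl⟩
  refine ⟨⟨?_, ?_, ?_, ?_, ?_, ?_⟩, ?_, ?_, ?_⟩
  · -- discrete
    intro x hx
    exact ⟨1, one_pos, fun y hy hnorm => eq_of_isInt_close (isInt_Rgen hx) (isInt_Rgen hy) hnorm⟩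
  · exact Rgen_spans hl im tm il tl
  · -- nonisotropic
    intro α hα
    exact Iform_ne_zero_of_mem hα
  · -- integral
    intro α hα β hβ
    obtain ⟨v, m, n, rfl, hv⟩ := hα
    obtain ⟨w, m', n', rfl, hw⟩ := hβ
    obtain ⟨c, hc, -⟩ := BC_key v w (by tauto) (by tauto)
    refine ⟨c, ?_⟩
    simp only [Iform_shift_left, Iform_shift_right]
    rw [Iform_comm, hc]
  · -- reflects
    intro α hα
    have hsub : ∀ β ∈ R, reflV l α β ∈ R := fun β hβ =>
      reflV_mem_Rgen him hil himl himil htm htl html htmtl hα hβ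
    apply Set.Subset.antisymm
    · rintro _ ⟨β, hβ, rfl⟩
      exact hsub β hβ
    · intro x hx
      exact ⟨reflV l α x, hsub x hx, reflV_invol α x (Iform_ne_zero_of_mem hα)⟩
  · -- irreducible
    intro R1 R2 hU horth
    by_contra hcon
    push_neg at hcon
    obtain ⟨h1, h2⟩ := hcon
    obtain ⟨x, hx⟩ := h1
    obtain ⟨y, hy⟩ := h2
    have hxR : x ∈ R := hU ▸ Set.mem_union_left _ hx
    have hyR : y ∈ R := hU ▸ Set.mem_union_right _ hy
    obtain ⟨i, hi⟩ := nonzero_coord hxR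
    obtain ⟨j, hj⟩ := nonzero_coord hyR
    have heiR : εv l i ∈ R1 ∪ R2 := hU.symm ▸ εv_mem_Rgen i
    have hejR : εv l j ∈ R1 ∪ R2 := hU.symm ▸ εv_mem_Rgen j
    have hei : εv l i ∈ R1 := by
      rcases heiR with h | h
      · exact h
      · exact absurd (horth x hx _ h) hi
    have hej : εv l j ∈ R2 := by
      rcases hejR with h | h
      · exfalso
        have := horth _ h y hy
        rw [Iform_comm] at this
        exact hj this
      · exact h
    have hij : i ≠ j := by
      rintro rfl
      have := horth _ hei _ hej
      rw [Iform_eps, if_pos rfl] at this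
      norm_num at this
    have huR : εv l i + εv l j ∈ R1 ∪ R2 := hU.symm ▸ pair_mem_Rgen hij
    have hIuj : Iform l (εv l i + εv l j) (εv l j) = 1 := by
      rw [Iform_add_left, Iform_eps, Iform_eps, if_pos rfl, if_neg hij]
      norm_num
    rcases huR with h | h
    · have := horth _ h _ hej
      rw [hIuj] at this
      norm_num at this
    · have := horth _ hei _ h
      rw [Iform_add_right, Iform_eps, Iform_eps, if_pos rfl, if_neg hij] at this
      norm_num at this
  · -- non-reduced
    refine ⟨εv l i0, εv_mem_Rgen i0, ?_⟩
    refine ⟨(2 : ℝ) • εv l i0, 0, 0, by push_cast; module, Or.inr (Or.inr ⟨?_, dvd_zero _, dvd_zero _⟩)⟩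
    exact mem_BCl_iff.2 ⟨i0, 1, by norm_num, by push_cast; module⟩
  · -- marking
    refine ⟨Submodule.span_mono (by simp), ?_, av l, av_ne_zero,
      Submodule.mem_span_singleton_self _, ?_⟩
    · exact finrank_span_singleton av_ne_zero
    · have h1 : εv l i0 + ((1 : ℤ) : ℝ) • av l + ((0 : ℤ) : ℝ) • bv l ∈ R :=
        short_mem_Rgen (εv_mem_BCs i0) 1 0
      have h2 : εv l i0 ∈ R := εv_mem_Rgen i0
      have hav : av l = (εv l i0 + ((1 : ℤ) : ℝ) • av l + ((0 : ℤ) : ℝ) • bv l) - εv l i0 := by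
        push_cast; module
      rw [hav]
      exact sub_mem (AddSubgroup.subset_closure h1) (AddSubgroup.subset_closure h2)
  · -- quotient
    apply Set.Subset.antisymm
    · rintro _ ⟨x, ⟨v, m, n, rfl, hv⟩, rfl⟩
      refine ⟨v + (n : ℝ) • bv l, ⟨v, n, rfl, ?_⟩, ?_⟩
      · rcases hv with h | ⟨h, _, h2⟩ | ⟨h, _, h2⟩
        · exact Or.inl h
        · exact Or.inr (Or.inl ⟨h, h2⟩)
        · exact Or.inr (Or.inr ⟨h, h2⟩)
      · apply (Submodule.Quotient.eq (Ga l)).2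
        have : v + (n : ℝ) • bv l - (v + (m : ℝ) • av l + (n : ℝ) • bv l)
            = (-(m : ℝ)) • av l := by module
        rw [this]
        exact Submodule.smul_mem _ _ (Submodule.mem_span_singleton_self _)
    · rintro _ ⟨x, ⟨v, n, rfl, hv⟩, rfl⟩
      refine ⟨v + (n : ℝ) • bv l, ⟨v, 0, n, by push_cast; module, ?_⟩, rfl⟩
      rcases hv with h | ⟨h, h2⟩ | ⟨h, h2⟩
      · exact Or.inl h
      · exact Or.inr (Or.inl ⟨h, dvd_zero _, h2⟩)
      · exact Or.inr (Or.inr ⟨h, dvd_zero _, h2⟩)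

end NRC
noncomputable section

/-- **Well-definedness of the non-reduced classical types** `X_l^{(1)}, X_l^{(2)}(1),
X_l^{(2)}(2), X_l^{(4)}`. -/
theorem nonreduced_classical_well_defined
    {l : ℕ} (hl : 1 ≤ l) (X : AffType) (hX : X = AffType.BBv → 2 ≤ l)
    (R : Set (V l))
    (hR : R = E1 l X ∨ R = E2 l X 1 ∨ R = E2 l X 2 ∨ R = E4 l X) :
    IsERS l R ∧
    IsNonReducedRS l R ∧
    IsMarking l R (Ga l) ∧
    (Ga l).mkQ '' R = (Ga l).mkQ '' Aff l X := by
  have htm : tfm X ∣ 2 := by cases X <;> decide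
  have htl : tfl X ∣ 4 := by cases X <;> decide
  have html : tfl X ∣ 2 * tfm X := by cases X <;> decide
  have htmtl : tfm X ∣ tfl X := by cases X <;> decide
  rw [NRC.Aff_eq X]
  rcases hR with rfl | rfl | rfl | rfl
  · rw [NRC.E1_eq X]
    exact NRC.Rgen_main hl 1 (tfm X) 1 (tfl X) (by norm_num) (by norm_num) (by norm_num)
      (by norm_num) htm htl html htmtl
  · rw [NRC.E2_eq X 1]
    exact NRC.Rgen_main hl 1 (tfm X) 2 (tfl X) (by norm_num) (by norm_num) (by norm_num)
      (by norm_num) htm htl html htmtl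
  · rw [NRC.E2_eq X 2]
    exact NRC.Rgen_main hl 2 (tfm X) 2 (tfl X) (by norm_num) (by norm_num) (by norm_num)
      (by norm_num) htm htl html htmtl
  · rw [NRC.E4_eq X]
    exact NRC.Rgen_main hl 2 (tfm X) 4 (tfl X) (by norm_num) (by norm_num) (by norm_num)
      (by norm_num) htm htl html htmtl

end
end
end
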